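/- arXiv:2001.02353 — 6 statements merged into one kernel-verified Lean document; each statement's English description precedes it below -/
import Mathlib

section
/- For every family v = (v_k)_{k∈S} with each v_k ∈ [0,1], the set {u ∈ [0,1] : F_v(u) = 0} has at most 2 elements. -/
/-!
Write `F u = ∑ g j u ^ j` with `g j ≥ 0` for `j ≥ 2` and `g 1 ≠ 0`. If `F` vanished at
`0 ≤ a < b < c`, then `0 = (c - b) F a - (c - a) F b + (b - a) F c = ∑ g j β j` where
`β j = (c - b) a ^ j - (c - a) b ^ j + (b - a) c ^ j` vanishes for `j ≤ 1` and is positive for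
`j ≥ 2` by strict convexity of `x ↦ x ^ j`. So `g j = 0` for all `j ≥ 2`, and `F` is affine with
nonzero slope, which cannot vanish twice.
-/

open Set

theorem Set.encard_le_two_of_forall_not_lt_lt {α : Type*} [LinearOrder α] {s : Set α}
    (h : ∀ a ∈ s, ∀ b ∈ s, ∀ c ∈ s, a < b → b < c → False) : s.encard ≤ 2 := by
  by_contra! hs
  obtain ⟨t, hts, ht⟩ := exists_subset_encard_eq (Order.add_one_le_of_lt hs)
  obtain ⟨x, y, z, hxy, hxz, hyz, rfl⟩ := encard_eq_three.mp ht
  simp only [insert_subset_iff, singleton_subset_iff] at hts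
  obtain ⟨hx, hy, hz⟩ := hts
  rcases hxy.lt_or_gt with h₁ | h₁ <;> rcases hxz.lt_or_gt with h₂ | h₂ <;>
    rcases hyz.lt_or_gt with h₃ | h₃
  all_goals grind

theorem pow_secant_pos {a b c : ℝ} (ha : 0 ≤ a) (hab : a < b) (hbc : b < c) {j : ℕ}
    (hj : 2 ≤ j) : 0 < (c - b) * a ^ j - (c - a) * b ^ j + (b - a) * c ^ j := by
  have hslope := (strictConvexOn_pow hj).slope_strict_mono_adjacent (mem_Ici.mpr ha)
    (mem_Ici.mpr (ha.trans (hab.trans hbc).le)) hab hbc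
  rw [div_lt_div_iff₀ (sub_pos.mpr hab) (sub_pos.mpr hbc)] at hslope
  linarith

theorem summable_mul_pow_of_abs_le {b g : ℕ → ℝ} (hb : Summable b) (hgb : ∀ j, |g j| ≤ |b j|)
    {u : ℝ} (hu : |u| ≤ 1) : Summable fun j => g j * u ^ j :=
  hb.abs.of_norm_bounded fun j => by
    rw [Real.norm_eq_abs, abs_mul, abs_pow]
    exact (mul_le_of_le_one_right (abs_nonneg _) (pow_le_one₀ (abs_nonneg u) hu)).trans (hgb j)

section PowerSeriesZeros

variable {g : ℕ → ℝ}

theorem coeff_eq_zero_of_three_zeros (hg : ∀ j, 2 ≤ j → 0 ≤ g j) {a b c : ℝ} (ha : 0 ≤ a)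
    (hab : a < b) (hbc : b < c) (hsa : Summable fun j => g j * a ^ j)
    (hsb : Summable fun j => g j * b ^ j) (hsc : Summable fun j => g j * c ^ j)
    (hza : ∑' j, g j * a ^ j = 0) (hzb : ∑' j, g j * b ^ j = 0)
    (hzc : ∑' j, g j * c ^ j = 0) {j : ℕ} (hj : 2 ≤ j) : g j = 0 := by
  set T : ℕ → ℝ := fun j => g j * ((c - b) * a ^ j - (c - a) * b ^ j + (b - a) * c ^ j)
  have hT : HasSum T 0 := by
    have := ((hsa.hasSum.mul_left (c - b)).sub (hsb.hasSum.mul_left (c - a))).add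
      (hsc.hasSum.mul_left (b - a))
    rw [hza, hzb, hzc, mul_zero, mul_zero, mul_zero, sub_zero, add_zero] at this
    exact this.congr_fun fun i => by ring
  have hT_nonneg : ∀ i, 0 ≤ T i := by
    intro i
    rcases lt_or_ge i 2 with hi | hi
    · interval_cases i <;> exact le_of_eq (by simp only [T]; ring)
    · exact mul_nonneg (hg i hi) (pow_secant_pos ha hab hbc hi).le
  have hTj : T j = 0 := congrFun ((hasSum_zero_iff_of_nonneg hT_nonneg).mp hT) j
  exact (mul_eq_zero.mp hTj).resolve_right (pow_secant_pos ha hab hbc hj).ne'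

theorem tsum_mul_pow_of_coeff_eq_zero (hg : ∀ j, 2 ≤ j → g j = 0) (u : ℝ) :
    ∑' j, g j * u ^ j = g 0 + g 1 * u := by
  rw [tsum_eq_sum (s := Finset.range 2) fun j hj => by
    rw [hg j (by simp at hj; omega), zero_mul]]
  simp [Finset.sum_range_succ]

theorem encard_zeros_tsum_mul_pow_le_two (hg : ∀ j, 2 ≤ j → 0 ≤ g j) (hg1 : g 1 ≠ 0) {s : Set ℝ}
    (hs : s ⊆ Ici 0) (hsum : ∀ u ∈ s, Summable fun j => g j * u ^ j) :
    {u ∈ s | ∑' j, g j * u ^ j = 0}.encard ≤ 2 := by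
  refine encard_le_two_of_forall_not_lt_lt
    fun a ⟨has, hza⟩ b ⟨hbs, hzb⟩ c ⟨hcs, hzc⟩ hab hbc => ?_
  have hcoeff := fun j => coeff_eq_zero_of_three_zeros hg (hs has) hab hbc (hsum a has)
    (hsum b hbs) (hsum c hcs) hza hzb hzc (j := j)
  rw [tsum_mul_pow_of_coeff_eq_zero hcoeff] at hzb hzc
  exact hg1 (by nlinarith)

end PowerSeriesZeros

theorem stmt_1_general (b : ℕ → ℝ)
    (hb_nonneg : ∀ j, j ≠ 1 → 0 ≤ b j) (hb1 : b 1 < 0)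
    (hb_sum : Summable b)
    (S : Finset ℕ) (hS1 : 1 ∉ S)
    (v : S → ℝ) (hv : ∀ k, v k ∈ Set.Icc (0:ℝ) 1) :
    {u ∈ Set.Icc (0:ℝ) 1 |
      (∑' j : ℕ, if h : j ∈ S then b j * v ⟨j, h⟩ * u ^ j else b j * u ^ j) = 0}.encard ≤ 2 := by
  set w : ℕ → ℝ := fun j => if h : j ∈ S then v ⟨j, h⟩ else 1
  have hw : ∀ j, w j ∈ Icc 0 1 := fun j => by
    by_cases h : j ∈ S <;> simp [w, h, hv]
  have hF (u : ℝ) : (∑' j : ℕ, if h : j ∈ S then b j * v ⟨j, h⟩ * u ^ j else b j * u ^ j) =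
      ∑' j, b j * w j * u ^ j :=
    tsum_congr fun j => by by_cases h : j ∈ S <;> simp [w, h]
  simp only [hF]
  refine encard_zeros_tsum_mul_pow_le_two
    (fun j hj => mul_nonneg (hb_nonneg j (by omega)) (hw j).1)
    (by simpa [w, hS1] using hb1.ne) (fun u hu => hu.1) fun u hu =>
      summable_mul_pow_of_abs_le hb_sum (fun j => ?_) (abs_le.mpr ⟨by linarith [hu.1], hu.2⟩)
  rw [abs_mul, abs_of_nonneg (hw j).1]
  exact mul_le_of_le_one_right (abs_nonneg _) (hw j).2

theorem stmt_1 (b : ℕ → ℝ)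
    (hb_nonneg : ∀ j, j ≠ 1 → 0 ≤ b j) (hb1 : b 1 < 0)
    (hb_sum : Summable b) (hb_total : ∑' j, b j = 0)
    (S : Finset ℕ) (hS : S.Nonempty) (hS1 : 1 ∉ S)
    (hbS : ∀ k ∈ S, 0 < b k)
    (v : S → ℝ) (hv : ∀ k, v k ∈ Set.Icc (0:ℝ) 1) :
    {u ∈ Set.Icc (0:ℝ) 1 |
      (∑' j : ℕ, if h : j ∈ S then b j * v ⟨j, h⟩ * u ^ j else b j * u ^ j) = 0}.encard ≤ 2 :=
  stmt_1_general b hb_nonneg hb1 hb_sum S hS1 v hv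
end

section
/- For every family v = (v_k)_{k∈S} with each v_k ∈ [0,1], the set {u ∈ [0,1] : F_v(u) = 0} is nonempty, it has a minimum ρ(v), and ρ(v) ≤ ρ, where ρ = min{u ∈ [0,1] : B(u) = 0} is the minimal nonnegative root of B(u) = 0. -/
/-!
Write `F_v(u) = ∑ c_j u^j` with `c_j = b_j v_j` on `S` and `c_j = b_j` off `S`. Since `b ≥ 0` on `S`,
`0 ≤ c_j ≤ b_j` there, so `F_v(0) = c_0 ≥ 0` and `F_v(ρ) ≤ B(ρ) = 0`. The series is dominated by
`∑ |b_j|` on `[0,1]`, hence continuous, and the intermediate value theorem gives a zero in `[0, ρ]`;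
the zero set in `[0,1]` is closed, so it has a least element, which is at most `ρ`.
-/

open Set

section PowerSeries

variable {R : Type*} [NormedRing R] [NormOneClass R]

lemma norm_mul_pow_le_of_norm_le_one (a : R) {u : R} (hu : ‖u‖ ≤ 1) (j : ℕ) :
    ‖a * u ^ j‖ ≤ ‖a‖ :=
  calc ‖a * u ^ j‖ ≤ ‖a‖ * ‖u‖ ^ j := (norm_mul_le _ _).trans (by gcongr; exact norm_pow_le _ _)
    _ ≤ ‖a‖ * 1 := by gcongr; exact pow_le_one₀ (norm_nonneg u) hu
    _ = ‖a‖ := mul_one _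

variable [CompleteSpace R] {a : ℕ → R}

lemma summable_mul_pow_of_norm_le_one (ha : Summable fun j => ‖a j‖) {u : R} (hu : ‖u‖ ≤ 1) :
    Summable fun j => a j * u ^ j :=
  ha.of_norm_bounded fun j => norm_mul_pow_le_of_norm_le_one (a j) hu j

lemma continuousOn_tsum_mul_pow (ha : Summable fun j => ‖a j‖) :
    ContinuousOn (fun u => ∑' j, a j * u ^ j) (Metric.closedBall 0 1) :=
  continuousOn_tsum (fun j => continuousOn_const.mul (continuousOn_pow j)) ha
    fun j _ hu => norm_mul_pow_le_of_norm_le_one (a j) (mem_closedBall_zero_iff.1 hu) j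

end PowerSeries

lemma tsum_mul_zero_pow {M : Type*} [Semiring M] [TopologicalSpace M] (a : ℕ → M) :
    ∑' j, a j * 0 ^ j = a 0 := by
  rw [tsum_eq_single 0 fun j hj => by rw [zero_pow hj, mul_zero], pow_zero, mul_one]

lemma Icc_zero_one_subset_closedBall : Icc (0 : ℝ) 1 ⊆ Metric.closedBall 0 1 := fun u hu => by
  rw [mem_closedBall_zero_iff, Real.norm_eq_abs, abs_le]
  exact ⟨by linarith [hu.1], hu.2⟩

lemma exists_isLeast_zero_le_of_continuousOn {f : ℝ → ℝ} {a b c : ℝ}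
    (hf : ContinuousOn f (Icc a b)) (hfa : 0 ≤ f a) (hc : c ∈ Icc a b) (hfc : f c ≤ 0) :
    ∃ x, IsLeast {u ∈ Icc a b | f u = 0} x ∧ x ≤ c := by
  have hsub : Icc a c ⊆ Icc a b := Icc_subset_Icc le_rfl hc.2
  obtain ⟨x₀, hx₀, hfx₀⟩ := intermediate_value_Icc' hc.1 (hf.mono hsub) ⟨hfc, hfa⟩
  have hclosed : IsClosed {u ∈ Icc a b | f u = 0} :=
    hf.preimage_isClosed_of_isClosed isClosed_Icc isClosed_singleton
  have hx₀_mem : x₀ ∈ {u ∈ Icc a b | f u = 0} := ⟨hsub hx₀, hfx₀⟩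
  obtain ⟨x, hx⟩ := (isCompact_Icc.of_isClosed_subset hclosed fun _ hu => hu.1).exists_isLeast
    ⟨x₀, hx₀_mem⟩
  exact ⟨x, hx, (hx.2 hx₀_mem).trans hx₀.2⟩

noncomputable def weightedCoeff (b : ℕ → ℝ) (S : Finset ℕ) (v : S → ℝ) (j : ℕ) : ℝ :=
  if h : j ∈ S then b j * v ⟨j, h⟩ else b j

section WeightedCoeff

variable {b : ℕ → ℝ} {S : Finset ℕ} {v : S → ℝ}

lemma weightedCoeff_mul_pow (u : ℝ) (j : ℕ) :
    weightedCoeff b S v j * u ^ j =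
      if h : j ∈ S then b j * v ⟨j, h⟩ * u ^ j else b j * u ^ j := by
  unfold weightedCoeff; split_ifs <;> rfl

lemma weightedCoeff_nonneg (hv : ∀ k, v k ∈ Icc (0:ℝ) 1) {j : ℕ} (hj : 0 ≤ b j) :
    0 ≤ weightedCoeff b S v j := by
  unfold weightedCoeff; split_ifs with h
  · exact mul_nonneg hj (hv _).1
  · exact hj

lemma weightedCoeff_le (hv : ∀ k, v k ∈ Icc (0:ℝ) 1) (hbS : ∀ k ∈ S, 0 ≤ b k) (j : ℕ) :
    weightedCoeff b S v j ≤ b j := by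
  unfold weightedCoeff; split_ifs with h
  · exact mul_le_of_le_one_right (hbS j h) (hv _).2
  · exact le_rfl

lemma abs_weightedCoeff_le (hv : ∀ k, v k ∈ Icc (0:ℝ) 1) (j : ℕ) :
    |weightedCoeff b S v j| ≤ |b j| := by
  unfold weightedCoeff; split_ifs with h
  · rw [abs_mul, abs_of_nonneg (hv _).1]
    exact mul_le_of_le_one_right (abs_nonneg _) (hv _).2
  · exact le_rfl

end WeightedCoeff

theorem stmt_2_general (b : ℕ → ℝ)
    (hb_nonneg : ∀ j, j ≠ 1 → 0 ≤ b j)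
    (hb_sum : Summable b)
    (ρ : ℝ) (hρ : IsLeast {u ∈ Set.Icc (0:ℝ) 1 | (∑' j : ℕ, b j * u ^ j) = 0} ρ)
    (S : Finset ℕ)
    (hbS : ∀ k ∈ S, 0 < b k)
    (v : S → ℝ) (hv : ∀ k, v k ∈ Set.Icc (0:ℝ) 1) :
    ∃ ρv : ℝ, IsLeast {u ∈ Set.Icc (0:ℝ) 1 |
      (∑' j : ℕ, if h : j ∈ S then b j * v ⟨j, h⟩ * u ^ j else b j * u ^ j) = 0} ρv ∧
      ρv ≤ ρ := by
  obtain ⟨⟨hρ_mem, hBρ⟩, -⟩ := hρ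
  have hbS' : ∀ k ∈ S, 0 ≤ b k := fun k hk => (hbS k hk).le
  set c := weightedCoeff b S v
  have hc_sum : Summable fun j => ‖c j‖ :=
    hb_sum.abs.of_nonneg_of_le (fun _ => norm_nonneg _) (abs_weightedCoeff_le hv)
  have hF_cont : ContinuousOn (fun u => ∑' j, c j * u ^ j) (Icc 0 1) :=
    (continuousOn_tsum_mul_pow hc_sum).mono Icc_zero_one_subset_closedBall
  have hF0 : 0 ≤ ∑' j, c j * 0 ^ j := by
    rw [tsum_mul_zero_pow]
    exact weightedCoeff_nonneg hv (hb_nonneg 0 zero_ne_one)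
  have hFρ : ∑' j, c j * ρ ^ j ≤ 0 := by
    have hρ_ball := Icc_zero_one_subset_closedBall hρ_mem
    rw [← hBρ]
    refine Summable.tsum_le_tsum (fun j => ?_)
      (summable_mul_pow_of_norm_le_one hc_sum (mem_closedBall_zero_iff.1 hρ_ball))
      (summable_mul_pow_of_norm_le_one hb_sum.norm (mem_closedBall_zero_iff.1 hρ_ball))
    exact mul_le_mul_of_nonneg_right (weightedCoeff_le hv hbS' j) (pow_nonneg hρ_mem.1 j)
  simpa only [c, weightedCoeff_mul_pow] using
    exists_isLeast_zero_le_of_continuousOn hF_cont hF0 hρ_mem hFρ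

theorem stmt_2 (b : ℕ → ℝ)
    (hb_nonneg : ∀ j, j ≠ 1 → 0 ≤ b j) (hb1 : b 1 < 0)
    (hb_sum : Summable b) (hb_total : ∑' j, b j = 0)
    (ρ : ℝ) (hρ : IsLeast {u ∈ Set.Icc (0:ℝ) 1 | (∑' j : ℕ, b j * u ^ j) = 0} ρ)
    (S : Finset ℕ) (hS : S.Nonempty) (hS1 : 1 ∉ S)
    (hbS : ∀ k ∈ S, 0 < b k)
    (v : S → ℝ) (hv : ∀ k, v k ∈ Set.Icc (0:ℝ) 1) :
    ∃ ρv : ℝ, IsLeast {u ∈ Set.Icc (0:ℝ) 1 |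
      (∑' j : ℕ, if h : j ∈ S then b j * v ⟨j, h⟩ * u ^ j else b j * u ^ j) = 0} ρv ∧
      ρv ≤ ρ :=
  stmt_2_general b hb_nonneg hb_sum ρ hρ S hbS v hv
end

section
/- The function v ↦ ρ(v) is infinitely differentiable (of class C^∞, in the sense of ContDiffOn with smoothness order ∞) on the set {v : v_k ∈ [0,1) for all k ∈ S}, viewed as a subset of ℝ^S. -/
/-!
Write `F_v(u) = ∑ⱼ cⱼ(v) uʲ`. All coefficients except `c₁ = b₁ < 0` are nonnegative, so `F_v` is
convex on `[0, 1]`, and for `v ∈ [0, 1)^S` one has `F_v(1) = -∑_{k ∈ S} b_k (1 - v_k) < 0`.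
Convexity puts `F_v` below the chord from any zero `r ∈ [0, 1)` to `(1, F_v(1))`: hence `F_v` has a
unique zero in `[0, 1]`, and its derivative there is at most `F_v(1) / (1 - r) < 0`. On `(-1, 0)`
the linear term makes `F_v` positive. Since `(v, u) ↦ F_v(u)` is smooth for `|u| < 1`, the implicit
function theorem gives a smooth `g` with `F_v(g v) = 0` near `v₀` and `g v₀ = ρ(v₀)`. Near `v₀`,
`g v ∈ (-1, 1)`, hence `g v ∈ [0, 1)` is the unique zero of `F_v` in `[0, 1]`, i.e. `g v = ρ(v)`.
-/

open Set Filter Topology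

section PowerSeries

variable {c : ℕ → ℝ}

lemma summable_mul_pow_of_abs_le_one (hc : Summable c) {u : ℝ} (hu : |u| ≤ 1) :
    Summable (fun j => c j * u ^ j) := by
  refine Summable.of_norm_bounded (summable_abs_iff.mpr hc) fun j => ?_
  rw [Real.norm_eq_abs, abs_mul, abs_pow]
  exact mul_le_of_le_one_right (abs_nonneg _) (pow_le_one₀ (abs_nonneg u) hu)

lemma analyticAt_tsum_mul_pow (hc : Summable c) {u : ℝ} (hu : |u| < 1) :
    AnalyticAt ℝ (fun u => ∑' j, c j * u ^ j) u := by
  set p := FormalMultilinearSeries.ofScalars ℝ c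
  have hp : 1 ≤ p.radius := by
    simpa using p.le_radius_of_summable_norm (r := 1)
      (by simpa [p, FormalMultilinearSeries.ofScalars_norm] using summable_abs_iff.mpr hc)
  have hu' : u ∈ Metric.eball (0 : ℝ) p.radius := by
    rw [Metric.mem_eball, edist_zero_right]
    exact lt_of_lt_of_le (by simpa [Real.enorm_eq_ofReal_abs] using hu) hp
  have hsum : p.sum = fun u => ∑' j, c j * u ^ j := by
    ext v
    exact (FormalMultilinearSeries.ofScalars_sum_eq (E := ℝ) c v).trans (by simp)
  exact hsum ▸ (p.hasFPowerSeriesOnBall (zero_lt_one.trans_le hp)).analyticAt_of_mem hu'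

lemma convexOn_tsum_mul_pow (hc_nonneg : ∀ j, j ≠ 1 → 0 ≤ c j) (hc : Summable c) :
    ConvexOn ℝ (Icc 0 1) (fun u => ∑' j, c j * u ^ j) := by
  refine ⟨convex_Icc 0 1, fun x hx y hy a a' ha ha' haa' => ?_⟩
  have hsum : ∀ {u : ℝ}, u ∈ Icc (0 : ℝ) 1 → Summable (fun j => c j * u ^ j) := fun hu =>
    summable_mul_pow_of_abs_le_one hc (abs_le.mpr ⟨by linarith [hu.1], hu.2⟩)
  have hxy : a • x + a' • y ∈ Icc (0 : ℝ) 1 := convex_Icc 0 1 hx hy ha ha' haa'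
  have hsum' := ((hsum hx).mul_left a).add ((hsum hy).mul_left a')
  simp only [smul_eq_mul] at hxy ⊢
  rw [← tsum_mul_left, ← tsum_mul_left, ← ((hsum hx).mul_left a).tsum_add ((hsum hy).mul_left a')]
  refine (hsum hxy).tsum_le_tsum (fun j => ?_) hsum'
  rcases eq_or_ne j 1 with rfl | hj
  · exact le_of_eq (by simp only [pow_one]; ring)
  · have hpow := (convexOn_pow j).2 (mem_Ici.mpr hx.1) (mem_Ici.mpr hy.1) ha ha' haa'
    simp only [smul_eq_mul] at hpow
    nlinarith [mul_le_mul_of_nonneg_left hpow (hc_nonneg j hj)]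

lemma tsum_mul_pow_le_of_eq_zero (hc_nonneg : ∀ j, j ≠ 1 → 0 ≤ c j) (hc : Summable c)
    {r t : ℝ} (hr : 0 ≤ r) (hrt : r < t) (ht : t ≤ 1) (hroot : ∑' j, c j * r ^ j = 0) :
    ∑' j, c j * t ^ j ≤ (t - r) / (1 - r) * ∑' j, c j := by
  have h1r : 0 < 1 - r := by linarith
  have h1r' : 1 - r ≠ 0 := h1r.ne'
  have hconv := (convexOn_tsum_mul_pow hc_nonneg hc).2 ⟨hr, by linarith⟩ ⟨zero_le_one, le_rfl⟩
    (div_nonneg (by linarith) h1r.le : 0 ≤ (1 - t) / (1 - r))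
    (div_nonneg (by linarith) h1r.le : 0 ≤ (t - r) / (1 - r))
    (by rw [← add_div, div_eq_one_iff_eq h1r']; ring)
  have ht' : (1 - t) / (1 - r) * r + (t - r) / (1 - r) = t := by
    field_simp
    ring
  simp only [smul_eq_mul, mul_one, one_pow] at hconv
  rwa [ht', hroot, mul_zero, zero_add] at hconv

lemma eq_of_tsum_mul_pow_eq_zero (hc_nonneg : ∀ j, j ≠ 1 → 0 ≤ c j) (hc : Summable c)
    (hneg : ∑' j, c j < 0) {r t : ℝ} (hr : r ∈ Icc (0 : ℝ) 1) (ht : t ∈ Icc (0 : ℝ) 1)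
    (hr0 : ∑' j, c j * r ^ j = 0) (ht0 : ∑' j, c j * t ^ j = 0) : r = t := by
  have hnot_lt : ∀ {r t : ℝ}, r ∈ Icc (0 : ℝ) 1 → t ∈ Icc (0 : ℝ) 1 →
      ∑' j, c j * r ^ j = 0 → ∑' j, c j * t ^ j = 0 → ¬ r < t := by
    intro r t hr ht hr0 ht0 hrt
    have hbound := tsum_mul_pow_le_of_eq_zero hc_nonneg hc hr.1 hrt ht.2 hr0
    have hpos : 0 < (t - r) / (1 - r) := div_pos (by linarith) (by linarith [ht.2])
    nlinarith
  exact le_antisymm (le_of_not_gt (hnot_lt ht hr ht0 hr0)) (le_of_not_gt (hnot_lt hr ht hr0 ht0))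

lemma neg_of_hasDerivAt_tsum_mul_pow (hc_nonneg : ∀ j, j ≠ 1 → 0 ≤ c j) (hc : Summable c)
    (hneg : ∑' j, c j < 0) {r m : ℝ} (hr : 0 ≤ r) (hr1 : r < 1)
    (hroot : ∑' j, c j * r ^ j = 0) (hm : HasDerivAt (fun u => ∑' j, c j * u ^ j) m r) :
    m < 0 := by
  have hslope : ∀ᶠ t in 𝓝[>] r,
      slope (fun u => ∑' j, c j * u ^ j) r t ≤ (∑' j, c j) / (1 - r) := by
    filter_upwards [Ioo_mem_nhdsGT hr1] with t ht
    have hbound := tsum_mul_pow_le_of_eq_zero hc_nonneg hc hr ht.1 ht.2.le hroot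
    rw [slope_def_field, hroot, sub_zero, div_le_div_iff₀ (by linarith [ht.1]) (by linarith)]
    rw [div_mul_eq_mul_div, le_div_iff₀ (by linarith)] at hbound
    linarith
  have hm' := le_of_tendsto ((hasDerivAt_iff_tendsto_slope.mp hm).mono_left
    (nhdsGT_le_nhdsNE r)) hslope
  exact hm'.trans_lt (div_neg_of_neg_of_pos hneg (by linarith))

/-- Bounding the tail `∑_{j ≥ 2} cⱼ uʲ` below by `-u² ∑_{j ≥ 2} cⱼ ≥ u² (c₀ + c₁)` gives
`∑ cⱼ uʲ ≥ c₀ (1 + u²) + c₁ u (1 + u)`. -/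
lemma tsum_mul_pow_pos_of_neg (hc_nonneg : ∀ j, j ≠ 1 → 0 ≤ c j) (hc : Summable c)
    (hc1 : c 1 < 0) (hsum : ∑' j, c j ≤ 0) {u : ℝ} (hu1 : -1 < u) (hu0 : u < 0) :
    0 < ∑' j, c j * u ^ j := by
  have habs : |u| ≤ 1 := abs_le.mpr ⟨hu1.le, hu0.le.trans zero_le_one⟩
  have hcu := summable_mul_pow_of_abs_le_one hc habs
  have hsplit := hcu.sum_add_tsum_nat_add 2
  have hsplit1 := hc.sum_add_tsum_nat_add 2
  simp only [Finset.sum_range_succ, Finset.sum_range_zero, pow_zero, pow_one] at hsplit hsplit1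
  have htail : -(u ^ 2 * ∑' i, c (i + 2)) ≤ ∑' i, c (i + 2) * u ^ (i + 2) := by
    rw [← tsum_mul_left, ← tsum_neg]
    refine Summable.tsum_le_tsum (fun i => ?_)
      (((summable_nat_add_iff 2).mpr hc).mul_left _).neg ((summable_nat_add_iff 2).mpr hcu)
    have hi : -1 ≤ u ^ i := (abs_le.mp (abs_pow u i ▸ pow_le_one₀ (abs_nonneg u) habs)).1
    have hci := mul_nonneg (hc_nonneg (i + 2) (by omega)) (sq_nonneg u)
    rw [pow_add]
    nlinarith
  have hc0 := hc_nonneg 0 (by norm_num)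
  have hT : ∑' i, c (i + 2) ≤ -c 0 - c 1 := by linarith
  nlinarith [mul_nonneg hc0 (sq_nonneg u), mul_le_mul_of_nonneg_left hT (sq_nonneg u),
    mul_pos_of_neg_of_neg hc1 (mul_neg_of_neg_of_pos hu0 (by linarith : 0 < 1 + u))]

end PowerSeries

lemma ContinuousLinearMap.isInvertible_of_apply_one_ne_zero {𝕜 : Type*} [Field 𝕜]
    [TopologicalSpace 𝕜] [IsTopologicalRing 𝕜] {L : 𝕜 →L[𝕜] 𝕜} (h : L 1 ≠ 0) :
    L.IsInvertible :=
  ⟨ContinuousLinearEquiv.unitsEquivAut 𝕜 (Units.mk0 _ h), ContinuousLinearMap.ext_ring (by simp)⟩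

section ScaledCoeff

variable {b : ℕ → ℝ} {S : Finset ℕ} {v : S → ℝ}

/-- `F_v(u) = ∑' j, scaledCoeff b S v j * u ^ j`. -/
noncomputable def scaledCoeff (b : ℕ → ℝ) (S : Finset ℕ) (v : S → ℝ) (j : ℕ) : ℝ :=
  if h : j ∈ S then b j * v ⟨j, h⟩ else b j

lemma scaledCoeff_nonneg (hb_nonneg : ∀ j, j ≠ 1 → 0 ≤ b j) (hv : ∀ k, 0 ≤ v k) {j : ℕ}
    (hj : j ≠ 1) : 0 ≤ scaledCoeff b S v j := by
  unfold scaledCoeff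
  split
  · exact mul_nonneg (hb_nonneg j hj) (hv _)
  · exact hb_nonneg j hj

lemma scaledCoeff_eq_sub (j : ℕ) :
    scaledCoeff b S v j = b j - if h : j ∈ S then b j * (1 - v ⟨j, h⟩) else 0 := by
  unfold scaledCoeff
  split <;> ring

lemma summable_scaledCoeff (hb : Summable b) : Summable (scaledCoeff b S v) := by
  rw [show scaledCoeff b S v = _ from funext scaledCoeff_eq_sub]
  exact hb.sub (summable_of_ne_finset_zero (s := S) fun j hj => dif_neg hj)

lemma tsum_scaledCoeff_mul_pow {u : ℝ} (hb : Summable fun j => b j * u ^ j) :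
    ∑' j, scaledCoeff b S v j * u ^ j =
      ∑' j, b j * u ^ j - ∑ k : S, b k * (1 - v k) * u ^ (k : ℕ) := by
  set e : ℕ → ℝ := fun j => (if h : j ∈ S then b j * (1 - v ⟨j, h⟩) else 0) * u ^ j
  have he : ∀ j ∉ S, e j = 0 := fun j hj => by simp [e, hj]
  calc ∑' j, scaledCoeff b S v j * u ^ j = ∑' j, (b j * u ^ j - e j) :=
        tsum_congr fun j => by rw [scaledCoeff_eq_sub, sub_mul]
    _ = ∑' j, b j * u ^ j - ∑ j ∈ S, e j := by
        rw [hb.tsum_sub (summable_of_ne_finset_zero he), tsum_eq_sum he]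
    _ = _ := by
        rw [← Finset.sum_coe_sort S]
        congr 1
        exact Finset.sum_congr rfl fun k _ => by simp [e, k.2]

lemma tsum_scaledCoeff_neg (hb : Summable b) (hb_total : ∑' j, b j = 0) (hS : S.Nonempty)
    (hbS : ∀ k ∈ S, 0 < b k) (hv : ∀ k, v k < 1) : ∑' j, scaledCoeff b S v j < 0 := by
  have hsum := tsum_scaledCoeff_mul_pow (v := v) (u := 1) (by simpa using hb)
  simp only [one_pow, mul_one, hb_total, zero_sub] at hsum
  rw [hsum, neg_lt_zero]
  have : Nonempty S := hS.coe_sort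
  exact Finset.sum_pos (fun k _ => mul_pos (hbS k k.2) (by linarith [hv k])) Finset.univ_nonempty

lemma contDiffAt_tsum_scaledCoeff_mul_pow (hb : Summable b) {n : WithTop ℕ∞} {v₀ : S → ℝ}
    {u₀ : ℝ} (hu₀ : |u₀| < 1) :
    ContDiffAt ℝ n (fun p : (S → ℝ) × ℝ => ∑' j, scaledCoeff b S p.1 j * p.2 ^ j) (v₀, u₀) := by
  have hseries : ContDiffAt ℝ n (fun p : (S → ℝ) × ℝ => ∑' j, b j * p.2 ^ j) (v₀, u₀) :=
    (analyticAt_tsum_mul_pow hb hu₀).contDiffAt.comp (v₀, u₀) contDiffAt_snd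
  have hpoly : ContDiff ℝ n
      (fun p : (S → ℝ) × ℝ => ∑ k : S, b k * (1 - p.1 k) * p.2 ^ (k : ℕ)) := by
    fun_prop
  refine (hseries.sub hpoly.contDiffAt).congr_of_eventuallyEq ?_
  filter_upwards [continuousAt_snd.preimage_mem_nhds
    (isOpen_lt continuous_abs continuous_const |>.mem_nhds hu₀)] with p hp
  exact tsum_scaledCoeff_mul_pow (summable_mul_pow_of_abs_le_one hb (le_of_lt hp))

lemma isInvertible_fderiv_tsum_scaledCoeff_mul_pow_comp_inr (hb_nonneg : ∀ j, j ≠ 1 → 0 ≤ b j)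
    (hb : Summable b) (hb_total : ∑' j, b j = 0) (hS : S.Nonempty) (hbS : ∀ k ∈ S, 0 < b k)
    (hv : ∀ k, v k ∈ Ico (0 : ℝ) 1) {r : ℝ} (hr : r ∈ Ico (0 : ℝ) 1)
    (hr0 : ∑' j, scaledCoeff b S v j * r ^ j = 0) :
    (fderiv ℝ (fun p : (S → ℝ) × ℝ => ∑' j, scaledCoeff b S p.1 j * p.2 ^ j) (v, r) ∘L
      .inr ℝ (S → ℝ) ℝ).IsInvertible := by
  have hF := contDiffAt_tsum_scaledCoeff_mul_pow (n := 1) hb (v₀ := v)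
    (abs_lt.mpr ⟨by linarith [hr.1], hr.2⟩)
  have hpartial := (hF.differentiableAt one_ne_zero).hasFDerivAt.comp_hasDerivAt r
    ((hasDerivAt_const r v).prodMk (hasDerivAt_id r))
  exact ContinuousLinearMap.isInvertible_of_apply_one_ne_zero
    (neg_of_hasDerivAt_tsum_mul_pow (fun _ => scaledCoeff_nonneg hb_nonneg fun k => (hv k).1)
      (summable_scaledCoeff hb) (tsum_scaledCoeff_neg hb hb_total hS hbS fun k => (hv k).2)
      hr.1 hr.2 hr0 hpartial).ne

lemma eq_of_tsum_scaledCoeff_mul_pow_eq_zero (hb_nonneg : ∀ j, j ≠ 1 → 0 ≤ b j) (hb1 : b 1 < 0)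
    (hb : Summable b) (hb_total : ∑' j, b j = 0) (hS : S.Nonempty) (hS1 : 1 ∉ S)
    (hbS : ∀ k ∈ S, 0 < b k) (hv : ∀ k, v k ∈ Ico (0 : ℝ) 1) {r u : ℝ}
    (hr : r ∈ Icc (0 : ℝ) 1) (hu : u ∈ Ioc (-1 : ℝ) 1)
    (hr0 : ∑' j, scaledCoeff b S v j * r ^ j = 0) (hu0 : ∑' j, scaledCoeff b S v j * u ^ j = 0) :
    r = u := by
  have hc_nonneg : ∀ j, j ≠ 1 → 0 ≤ scaledCoeff b S v j :=
    fun j => scaledCoeff_nonneg hb_nonneg fun k => (hv k).1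
  have hneg := tsum_scaledCoeff_neg hb hb_total hS hbS fun k => (hv k).2
  have hu_nonneg : 0 ≤ u := by
    by_contra! hu_neg
    have hc1 : scaledCoeff b S v 1 < 0 := by rwa [scaledCoeff, dif_neg hS1]
    exact (tsum_mul_pow_pos_of_neg hc_nonneg (summable_scaledCoeff hb) hc1 hneg.le hu.1
      hu_neg).ne' hu0
  exact eq_of_tsum_mul_pow_eq_zero hc_nonneg (summable_scaledCoeff hb) hneg hr ⟨hu_nonneg, hu.2⟩
    hr0 hu0

end ScaledCoeff

theorem stmt_5 (b : ℕ → ℝ)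
    (hb_nonneg : ∀ j, j ≠ 1 → 0 ≤ b j) (hb1 : b 1 < 0)
    (hb_sum : Summable b) (hb_total : ∑' j, b j = 0)
    (S : Finset ℕ) (hS : S.Nonempty) (hS1 : 1 ∉ S)
    (hbS : ∀ k ∈ S, 0 < b k)
    (ρfun : (S → ℝ) → ℝ)
    (hρfun : ∀ v : S → ℝ, (∀ k, v k ∈ Set.Icc (0:ℝ) 1) →
      IsLeast {u ∈ Set.Icc (0:ℝ) 1 |
        (∑' j : ℕ, if h : j ∈ S then b j * v ⟨j, h⟩ * u ^ j else b j * u ^ j) = 0} (ρfun v)) :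
    ContDiffOn ℝ (⊤ : ℕ∞) ρfun {v : S → ℝ | ∀ k, v k ∈ Set.Ico (0:ℝ) 1} := by
  set F : (S → ℝ) × ℝ → ℝ := fun p => ∑' j, scaledCoeff b S p.1 j * p.2 ^ j
  have hρ (v : S → ℝ) (hv : ∀ k, v k ∈ Ico (0 : ℝ) 1) : ρfun v ∈ Icc 0 1 ∧ F (v, ρfun v) = 0 := by
    simpa only [F, scaledCoeff, dite_mul, mem_ofPred_eq] using
      (hρfun v fun k => Ico_subset_Icc_self (hv k)).1
  intro v₀ hv₀
  obtain ⟨hρ₀, hFρ₀⟩ := hρ v₀ hv₀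
  have hρ₀1 : ρfun v₀ < 1 := by
    refine hρ₀.2.lt_of_ne fun h => ?_
    have := tsum_scaledCoeff_neg hb_sum hb_total hS hbS fun k => (hv₀ k).2
    simp only [F, h, one_pow, mul_one] at hFρ₀
    exact this.ne hFρ₀
  have hF : ContDiffAt ℝ (⊤ : ℕ∞) F (v₀, ρfun v₀) :=
    contDiffAt_tsum_scaledCoeff_mul_pow hb_sum (abs_lt.mpr ⟨by linarith [hρ₀.1], hρ₀1⟩)
  have hinv := isInvertible_fderiv_tsum_scaledCoeff_mul_pow_comp_inr hb_nonneg hb_sum hb_total hS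
    hbS hv₀ ⟨hρ₀.1, hρ₀1⟩ hFρ₀
  set g := hF.implicitFunction (by simp) hinv
  have hg₀ : g v₀ = ρfun v₀ := hF.implicitFunction_apply_self (by simp) hinv
  have hg : ContDiffAt ℝ (⊤ : ℕ∞) g v₀ := hF.contDiffAt_implicitFunction (by simp) hinv
  have hg_mem : ∀ᶠ v in 𝓝 v₀, g v ∈ Ioo (-1 : ℝ) 1 :=
    hg.continuousAt.eventually_mem (Ioo_mem_nhds (by linarith [hρ₀.1]) (hg₀ ▸ hρ₀1))
  have hρg : ρfun =ᶠ[𝓝[{v | ∀ k, v k ∈ Ico (0 : ℝ) 1}] v₀] g := by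
    filter_upwards [nhdsWithin_le_nhds ((hF.eventually_apply_implicitFunction (by simp) hinv).and
      hg_mem), self_mem_nhdsWithin] with v ⟨hFg, hgv⟩ hv
    obtain ⟨hρv, hFρv⟩ := hρ v hv
    exact eq_of_tsum_scaledCoeff_mul_pow_eq_zero hb_nonneg hb1 hb_sum hb_total hS hS1 hbS hv hρv
      ⟨hgv.1, hgv.2.le⟩ hFρv (hFg.trans hFρ₀)
  exact hg.contDiffWithinAt.congr_of_eventuallyEq hρg (hg₀ ▸ rfl)
end

section
/- There exists a family (ρ_l)_{l∈ℕ^S} of nonnegative real numbers such that for every v = (v_k)_{k∈S} with all v_k ∈ [0,1), the series Σ_{l∈ℕ^S} ρ_l v^l (where v^l = Π_{k∈S} v_k^{l_k}) converges and its sum equals ρ(v). -/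
/-!
Dividing `F_v(u) = 0` by `-b 1` turns it into the fixed-point equation
`u = Φ_v(u) := ∑_{j ≠ 1} (b j / -b 1) v_j^[j ∈ S] u ^ j`, whose right-hand side is a power series
with nonnegative coefficients in `u` and `v`. By Kleene's theorem the least fixed point of `Φ_v`
on `[0, ∞]` is `⨆ k, Φ_v^[k] 0`, and since `ρ(v)` is a fixed point while every fixed point in
`[0, 1]` is a root, it equals `ρ(v)`. Running the same iteration on formal power series in the
variables `(v_k)` with coefficients in `ℝ≥0∞`, where every sum exists and evaluation is
multiplicative, gives a coefficientwise increasing sequence of series; by monotone convergence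
its coefficientwise supremum evaluates at `v` to `⨆ k, Φ_v^[k] 0 = ρ(v)`.
-/

open scoped ENNReal

namespace ENNReal

theorem tsum_iSup_of_monotone {ι : Type*} {f : ℕ → ι → ℝ≥0∞} (hf : Monotone f) :
    ∑' i, ⨆ n, f n i = ⨆ n, ∑' i, f n i := by
  refine le_antisymm ?_ (iSup_le fun n => ENNReal.tsum_le_tsum fun i => le_iSup (f · i) n)
  rw [ENNReal.tsum_eq_iSup_sum]
  refine iSup_le fun s => ?_
  rw [ENNReal.finsetSum_iSup_of_monotone fun i _ _ h => hf h i]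
  exact iSup_mono fun n => ENNReal.sum_le_tsum s

noncomputable def tsumMulPow (W : ℕ → ℝ≥0∞) : ℝ≥0∞ →o ℝ≥0∞ where
  toFun w := ∑' j, W j * w ^ j
  monotone' _ _ h := ENNReal.tsum_le_tsum fun j => by gcongr

theorem ωScottContinuous_tsumMulPow (W : ℕ → ℝ≥0∞) :
    OmegaCompletePartialOrder.ωScottContinuous (tsumMulPow W) := by
  refine .of_map_ωSup_of_orderHom fun c => ?_
  change ∑' j, W j * (⨆ n, c n) ^ j = ⨆ n, ∑' j, W j * c n ^ j
  simp_rw [ENNReal.iSup_pow, ENNReal.mul_iSup]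
  exact tsum_iSup_of_monotone fun m n h j => by gcongr

open Finset in
theorem tsum_mul_tsum_eq_tsum_sum_antidiagonal {A : Type*} [AddCommMonoid A] [HasAntidiagonal A]
    (f g : A → ℝ≥0∞) :
    (∑' n, f n) * ∑' n, g n = ∑' n, ∑ kl ∈ antidiagonal n, f kl.1 * g kl.2 := by
  simp_rw [← ENNReal.tsum_mul_right, ← ENNReal.tsum_mul_left, ← ENNReal.tsum_prod,
    ← HasAntidiagonal.sigmaAntidiagonalEquivProd.tsum_eq, ENNReal.tsum_sigma',
    ← Finset.tsum_subtype]
  rfl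

end ENNReal

theorem tsum_eq_zero_iff_tsum_ofReal_eq {ι : Type*} {x : ι → ℝ} {i : ι} (hx : Summable x)
    (hnn : ∀ j ≠ i, 0 ≤ x j) (hi : x i ≤ 0) :
    ∑' j, x j = 0 ↔ ∑' j, ENNReal.ofReal (x j) = ENNReal.ofReal (-x i) := by
  classical
  have hrest_nonneg : ∀ j, 0 ≤ if j = i then 0 else x j := fun j => by
    split_ifs with h
    exacts [le_rfl, hnn j h]
  have hrest : ∑' j, ENNReal.ofReal (x j) = ENNReal.ofReal (∑' j, if j = i then 0 else x j) := by
    rw [ENNReal.ofReal_tsum_of_nonneg hrest_nonneg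
      (hx.summable_of_eq_zero_or_self fun j => by split_ifs <;> simp)]
    refine tsum_congr fun j => ?_
    split_ifs with h
    · rw [h, ENNReal.ofReal_of_nonpos hi, ENNReal.ofReal_zero]
    · rfl
  rw [hrest, ENNReal.ofReal_eq_ofReal_iff (tsum_nonneg hrest_nonneg) (neg_nonneg.mpr hi),
    hx.tsum_eq_add_tsum_ite i]
  constructor <;> intro h <;> linarith

namespace MvPowerSeries

variable {σ : Type*}

noncomputable def evalENNReal (V : σ → ℝ≥0∞) : MvPowerSeries σ ℝ≥0∞ →* ℝ≥0∞ where
  toFun f := ∑' n, coeff n f * n.prod fun k e => V k ^ e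
  map_one' := by
    classical
    rw [tsum_eq_single 0 fun n hn => by simp [coeff_one, hn]]
    simp
  map_mul' f g := by
    classical
    rw [ENNReal.tsum_mul_tsum_eq_tsum_sum_antidiagonal]
    refine tsum_congr fun n => ?_
    rw [coeff_mul, Finset.sum_mul]
    refine Finset.sum_congr rfl fun p hp => ?_
    rw [← Finset.HasAntidiagonal.mem_antidiagonal.mp hp,
      Finsupp.prod_add_index' (fun _ => pow_zero _) fun _ _ _ => pow_add _ _ _]
    ring

variable (V : σ → ℝ≥0∞)

theorem evalENNReal_apply (f : MvPowerSeries σ ℝ≥0∞) :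
    evalENNReal V f = ∑' n, coeff n f * n.prod fun k e => V k ^ e := rfl

@[simp]
theorem evalENNReal_C (a : ℝ≥0∞) : evalENNReal V (C a) = a := by
  classical
  rw [evalENNReal_apply, tsum_eq_single 0 fun n hn => by simp [coeff_C, hn]]
  simp

@[simp]
theorem evalENNReal_X (k : σ) : evalENNReal V (X k) = V k := by
  classical
  rw [evalENNReal_apply, tsum_eq_single (Finsupp.single k 1) fun n hn => by simp [coeff_X, hn]]
  simp

@[simp]
theorem evalENNReal_zero : evalENNReal V 0 = 0 := by
  simp [evalENNReal_apply]

theorem coeff_mul_mono {f f' g g' : MvPowerSeries σ ℝ≥0∞} (hf : ∀ n, coeff n f ≤ coeff n f')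
    (hg : ∀ n, coeff n g ≤ coeff n g') (n : σ →₀ ℕ) : coeff n (f * g) ≤ coeff n (f' * g') := by
  classical
  simp only [coeff_mul]
  exact Finset.sum_le_sum fun p _ => mul_le_mul' (hf _) (hg _)

theorem coeff_pow_mono {f g : MvPowerSeries σ ℝ≥0∞} (h : ∀ n, coeff n f ≤ coeff n g) (j : ℕ) :
    ∀ n, coeff n (f ^ j) ≤ coeff n (g ^ j) := by
  induction j with
  | zero => exact fun _ => le_rfl
  | succ j ih => simpa only [pow_succ] using coeff_mul_mono ih h

section PiTopology

open scoped MvPowerSeries.WithPiTopology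

theorem coeff_tsum (F : ℕ → MvPowerSeries σ ℝ≥0∞) (n : σ →₀ ℕ) :
    coeff n (∑' j, F j) = ∑' j, coeff n (F j) :=
  (WithPiTopology.hasSum_iff_hasSum_coeff.mp
    (WithPiTopology.summable_iff_summable_coeff.mpr fun _ => ENNReal.summable).hasSum
    n).tsum_eq.symm

noncomputable def tsumMulPow (G : ℕ → MvPowerSeries σ ℝ≥0∞) (f : MvPowerSeries σ ℝ≥0∞) :
    MvPowerSeries σ ℝ≥0∞ :=
  ∑' j, G j * f ^ j

theorem coeff_tsumMulPow_mono (G : ℕ → MvPowerSeries σ ℝ≥0∞) {f g : MvPowerSeries σ ℝ≥0∞}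
    (h : ∀ n, coeff n f ≤ coeff n g) (n : σ →₀ ℕ) :
    coeff n (tsumMulPow G f) ≤ coeff n (tsumMulPow G g) := by
  simp only [tsumMulPow, coeff_tsum]
  exact ENNReal.tsum_le_tsum fun j => coeff_mul_mono (fun _ => le_rfl) (coeff_pow_mono h j) n

theorem evalENNReal_tsum (F : ℕ → MvPowerSeries σ ℝ≥0∞) :
    evalENNReal V (∑' j, F j) = ∑' j, evalENNReal V (F j) := by
  simp only [evalENNReal_apply, coeff_tsum, ← ENNReal.tsum_mul_right]
  exact ENNReal.tsum_comm

theorem evalENNReal_tsumMulPow (G : ℕ → MvPowerSeries σ ℝ≥0∞) (f : MvPowerSeries σ ℝ≥0∞) :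
    evalENNReal V (tsumMulPow G f) =
      ENNReal.tsumMulPow (fun j => evalENNReal V (G j)) (evalENNReal V f) := by
  simp only [tsumMulPow, evalENNReal_tsum, map_mul, map_pow]
  rfl

end PiTopology

noncomputable def iSupIterate (T : MvPowerSeries σ ℝ≥0∞ → MvPowerSeries σ ℝ≥0∞) :
    MvPowerSeries σ ℝ≥0∞ :=
  fun n => ⨆ k, coeff n (T^[k] 0)

theorem evalENNReal_iSupIterate {T : MvPowerSeries σ ℝ≥0∞ → MvPowerSeries σ ℝ≥0∞}
    {Φ : ℝ≥0∞ → ℝ≥0∞}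
    (hT : ∀ f g, (∀ n, coeff n f ≤ coeff n g) → ∀ n, coeff n (T f) ≤ coeff n (T g))
    (hΦ : Function.Semiconj (evalENNReal V) T Φ) :
    evalENNReal V (iSupIterate T) = ⨆ k, Φ^[k] 0 := by
  have hcoeff : ∀ n, coeff n (iSupIterate T) = ⨆ k, coeff n (T^[k] 0) := fun _ => rfl
  have hstep : ∀ k n, coeff n (T^[k] 0) ≤ coeff n (T^[k + 1] 0) := by
    intro k
    induction k with
    | zero => simp
    | succ k ih =>
      rw [Function.iterate_succ_apply', Function.iterate_succ_apply' _ (k + 1)]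
      exact hT _ _ ih
  have hmono : Monotone fun k n => coeff n (T^[k] 0) * n.prod fun i e => V i ^ e :=
    monotone_nat_of_le_succ fun k n => mul_le_mul_left (hstep k n) _
  calc evalENNReal V (iSupIterate T)
      = ∑' n, ⨆ k, coeff n (T^[k] 0) * n.prod fun i e => V i ^ e := by
        simp only [evalENNReal_apply, hcoeff, ENNReal.iSup_mul]
    _ = ⨆ k, evalENNReal V (T^[k] 0) := ENNReal.tsum_iSup_of_monotone hmono
    _ = ⨆ k, Φ^[k] 0 := by simp only [(hΦ.iterate_right _).eq, evalENNReal_zero]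

theorem hasSum_toReal_coeff_mul_prod [Fintype σ]
    {f : MvPowerSeries σ ℝ≥0∞} {v : σ → ℝ} (hv : ∀ k, 0 ≤ v k) {a : ℝ} (ha : 0 ≤ a)
    (h : evalENNReal (fun k => ENNReal.ofReal (v k)) f = ENNReal.ofReal a) :
    HasSum (fun l : σ → ℕ => (coeff (Finsupp.equivFunOnFinite.symm l) f).toReal * ∏ k, v k ^ l k)
      a := by
  refine Finsupp.equivFunOnFinite.hasSum_iff.mp ?_
  rw [evalENNReal_apply] at h
  have hfin := h ▸ ENNReal.ofReal_ne_top
  convert ENNReal.hasSum_toReal hfin using 1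
  · ext n
    simp [ENNReal.toReal_mul, Finsupp.prod_fintype, ENNReal.toReal_prod, hv]
  · rw [← ENNReal.tsum_toReal_eq fun n => ne_top_of_le_ne_top hfin (ENNReal.le_tsum n), h,
      ENNReal.toReal_ofReal ha]

end MvPowerSeries

section RootEquation

open MvPowerSeries

variable (b : ℕ → ℝ) (S : Finset ℕ)

noncomputable def rootSummand (v : S → ℝ) (u : ℝ) (j : ℕ) : ℝ :=
  if h : j ∈ S then b j * v ⟨j, h⟩ * u ^ j else b j * u ^ j

/-- The coefficient of `u ^ j` in `Φ_v(u)`, as a series in `v`. For `j = 1` it vanishes because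
`ENNReal.ofReal (b 1 / -b 1) = ENNReal.ofReal (-1) = 0`. -/
noncomputable def weightSeries (j : ℕ) : MvPowerSeries S ℝ≥0∞ :=
  C (ENNReal.ofReal (b j / -b 1)) * if h : j ∈ S then X ⟨j, h⟩ else 1

variable {b S} {v : S → ℝ} {u : ℝ}

theorem evalENNReal_weightSeries_mul_pow (hv : ∀ k, 0 ≤ v k) (hu : 0 ≤ u) (j : ℕ) :
    evalENNReal (fun k => ENNReal.ofReal (v k)) (weightSeries b S j) * ENNReal.ofReal u ^ j =
      ENNReal.ofReal (rootSummand b S v u j / -b 1) := by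
  rw [← ENNReal.ofReal_pow hu]
  by_cases h : j ∈ S
  · simp only [weightSeries, rootSummand, h, dite_true, map_mul, evalENNReal_C, evalENNReal_X]
    rw [← ENNReal.ofReal_mul' (hv _), ← ENNReal.ofReal_mul' (pow_nonneg hu _)]
    ring_nf
  · simp only [weightSeries, rootSummand, h, dite_false, evalENNReal_C, mul_one]
    rw [← ENNReal.ofReal_mul' (pow_nonneg hu _)]
    ring_nf

theorem abs_rootSummand_le (hv : ∀ k, v k ∈ Set.Icc (0 : ℝ) 1) (hu : u ∈ Set.Icc (0 : ℝ) 1)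
    (j : ℕ) : |rootSummand b S v u j| ≤ |b j| := by
  have hpow : |u ^ j| ≤ 1 := by rw [abs_of_nonneg (pow_nonneg hu.1 j)]; exact pow_le_one₀ hu.1 hu.2
  unfold rootSummand
  split_ifs with h
  · have hvk : |v ⟨j, h⟩| ≤ 1 := by rw [abs_of_nonneg (hv _).1]; exact (hv _).2
    rw [abs_mul, abs_mul]
    calc |b j| * |v ⟨j, h⟩| * |u ^ j| ≤ |b j| * 1 * 1 := by gcongr
      _ = |b j| := by ring
  · rw [abs_mul]
    calc |b j| * |u ^ j| ≤ |b j| * 1 := by gcongr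
      _ = |b j| := mul_one _

theorem rootSummand_nonneg (hb : ∀ j, j ≠ 1 → 0 ≤ b j) (hv : ∀ k, 0 ≤ v k) (hu : 0 ≤ u)
    {j : ℕ} (hj : j ≠ 1) : 0 ≤ rootSummand b S v u j := by
  unfold rootSummand
  split_ifs
  · exact mul_nonneg (mul_nonneg (hb j hj) (hv _)) (pow_nonneg hu j)
  · exact mul_nonneg (hb j hj) (pow_nonneg hu j)

theorem rootSummand_one (hS1 : 1 ∉ S) : rootSummand b S v u 1 = b 1 * u := by
  simp [rootSummand, hS1]

theorem tsumMulPow_weightSeries_ofReal_eq_iff (hb : ∀ j, j ≠ 1 → 0 ≤ b j) (hb1 : b 1 < 0)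
    (hb_sum : Summable b) (hS1 : 1 ∉ S) (hv : ∀ k, v k ∈ Set.Icc (0 : ℝ) 1)
    (hu : u ∈ Set.Icc (0 : ℝ) 1) :
    ENNReal.tsumMulPow
        (fun j => evalENNReal (fun k => ENNReal.ofReal (v k)) (weightSeries b S j))
        (ENNReal.ofReal u) = ENNReal.ofReal u ↔
      ∑' j, rootSummand b S v u j = 0 := by
  have hsum : Summable (rootSummand b S v u) :=
    .of_norm_bounded hb_sum.abs (abs_rootSummand_le hv hu)
  have hb1' : 0 < -b 1 := neg_pos.mpr hb1
  have hone : -(rootSummand b S v u 1 / -b 1) = u := by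
    rw [rootSummand_one hS1, div_neg, neg_neg, mul_div_cancel_left₀ _ hb1.ne]
  change ∑' j, _ * _ = _ ↔ _
  simp only [evalENNReal_weightSeries_mul_pow (fun k => (hv k).1) hu.1]
  have key := tsum_eq_zero_iff_tsum_ofReal_eq (hsum.div_const (-b 1))
    (fun j hj => div_nonneg (rootSummand_nonneg hb (fun k => (hv k).1) hu.1 hj) hb1'.le)
    (by rw [← neg_nonneg, hone]; exact hu.1)
  rw [hone] at key
  rw [← key, tsum_div_const, div_eq_zero_iff]
  simp [hb1'.ne']

theorem lfp_tsumMulPow_weightSeries (hb : ∀ j, j ≠ 1 → 0 ≤ b j) (hb1 : b 1 < 0)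
    (hb_sum : Summable b) (hS1 : 1 ∉ S) (hv : ∀ k, v k ∈ Set.Icc (0 : ℝ) 1) {ρ : ℝ}
    (hρ : IsLeast {u ∈ Set.Icc (0 : ℝ) 1 | ∑' j, rootSummand b S v u j = 0} ρ) :
    (ENNReal.tsumMulPow
        fun j => evalENNReal (fun k => ENNReal.ofReal (v k)) (weightSeries b S j)).lfp =
      ENNReal.ofReal ρ := by
  set Φ := ENNReal.tsumMulPow
    fun j => evalENNReal (fun k => ENNReal.ofReal (v k)) (weightSeries b S j)
  have hfix {u : ℝ} (hu : u ∈ Set.Icc (0 : ℝ) 1) :=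
    tsumMulPow_weightSeries_ofReal_eq_iff hb hb1 hb_sum hS1 hv hu
  have hle : Φ.lfp ≤ ENNReal.ofReal ρ := Φ.lfp_le_fixed ((hfix hρ.1.1).2 hρ.1.2)
  set s := Φ.lfp.toReal
  have hs : Φ.lfp = ENNReal.ofReal s :=
    (ENNReal.ofReal_toReal (ne_top_of_le_ne_top ENNReal.ofReal_ne_top hle)).symm
  have hs_mem : s ∈ Set.Icc (0 : ℝ) 1 :=
    ⟨ENNReal.toReal_nonneg, (ENNReal.toReal_le_of_le_ofReal hρ.1.1.1 hle).trans hρ.1.1.2⟩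
  have hs_root : ∑' j, rootSummand b S v s j = 0 := (hfix hs_mem).1 (hs ▸ Φ.map_lfp)
  exact hle.antisymm (hs ▸ ENNReal.ofReal_le_ofReal (hρ.2 ⟨hs_mem, hs_root⟩))

end RootEquation

theorem stmt_8_general (b : ℕ → ℝ)
    (hb_nonneg : ∀ j, j ≠ 1 → 0 ≤ b j) (hb1 : b 1 < 0)
    (hb_sum : Summable b)
    (S : Finset ℕ) (hS1 : 1 ∉ S)
    (ρfun : (S → ℝ) → ℝ)
    (hρfun : ∀ v : S → ℝ, (∀ k, v k ∈ Set.Icc (0:ℝ) 1) →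
      IsLeast {u ∈ Set.Icc (0:ℝ) 1 |
        (∑' j : ℕ, if h : j ∈ S then b j * v ⟨j, h⟩ * u ^ j else b j * u ^ j) = 0} (ρfun v)) :
    ∃ ρc : (S → ℕ) → ℝ, (∀ l, 0 ≤ ρc l) ∧
      ∀ v : S → ℝ, (∀ k, v k ∈ Set.Ico (0:ℝ) 1) →
        HasSum (fun l : S → ℕ => ρc l * ∏ k, v k ^ l k) (ρfun v) := by
  open MvPowerSeries in
  set ρE := iSupIterate (tsumMulPow (weightSeries b S))
  refine ⟨fun l => (coeff (Finsupp.equivFunOnFinite.symm l) ρE).toReal,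
    fun l => ENNReal.toReal_nonneg, fun v hv => ?_⟩
  have hv' : ∀ k, v k ∈ Set.Icc (0 : ℝ) 1 := fun k => Set.Ico_subset_Icc_self (hv k)
  have hρ := hρfun v hv'
  refine hasSum_toReal_coeff_mul_prod (fun k => (hv k).1) hρ.1.1.1 ?_
  rw [evalENNReal_iSupIterate _ (fun _ _ => coeff_tsumMulPow_mono _)
      (evalENNReal_tsumMulPow _ _), ← bot_eq_zero, ← fixedPoints.lfp_eq_sSup_iterate _
      (ENNReal.ωScottContinuous_tsumMulPow _)]
  exact lfp_tsumMulPow_weightSeries hb_nonneg hb1 hb_sum hS1 hv' hρ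

theorem stmt_8 (b : ℕ → ℝ)
    (hb_nonneg : ∀ j, j ≠ 1 → 0 ≤ b j) (hb1 : b 1 < 0)
    (hb_sum : Summable b) (hb_total : ∑' j, b j = 0)
    (S : Finset ℕ) (hS : S.Nonempty) (hS1 : 1 ∉ S)
    (hbS : ∀ k ∈ S, 0 < b k)
    (ρfun : (S → ℝ) → ℝ)
    (hρfun : ∀ v : S → ℝ, (∀ k, v k ∈ Set.Icc (0:ℝ) 1) →
      IsLeast {u ∈ Set.Icc (0:ℝ) 1 |
        (∑' j : ℕ, if h : j ∈ S then b j * v ⟨j, h⟩ * u ^ j else b j * u ^ j) = 0} (ρfun v)) :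
    ∃ ρc : (S → ℕ) → ℝ, (∀ l, 0 ≤ ρc l) ∧
      ∀ v : S → ℝ, (∀ k, v k ∈ Set.Ico (0:ℝ) 1) →
        HasSum (fun l : S → ℕ => ρc l * ∏ k, v k ^ l k) (ρfun v) :=
  stmt_8_general b hb_nonneg hb1 hb_sum S hS1 ρfun hρfun
end

section
/- Assume b_0 > 0. Define the sequence (ρ_k)_{k≥0} by ρ_0 = 0, ρ_1 = −b_0/b_1, and, for k ≥ 1, ρ_{k+1} = −(1/b_1) Σ_{j=2}^{k+1} b_j ρ^{*(j)}_{k+1}, where ρ^{*(j)}_{n} = Σ_{l_1+⋯+l_j=n, l_i ≥ 0} ρ_{l_1}⋯ρ_{l_j} is the j-fold convolution (since ρ_0 = 0 this only involves ρ_i with i ≤ k, so the recursion is well defined). Then: ρ_k ≥ 0 for every k; for every v ∈ [0,1] the series Σ_{k=0}^∞ ρ_k v^k converges and its sum is the minimal nonnegative root in [0,1] of the equation b_0 v + Σ_{j=1}^∞ b_j u^j = 0 in the unknown u; and Σ_{k=0}^∞ ρ_k = ρ. -/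
/-!
Write `S_N(v) = ∑_{k<N} r_k v^k` and `G(u) = ∑_{j≥2} b_j u^j`, so that the roots `u ∈ [0,1]` of
`b_0 v + ∑_{j≥1} b_j u^j = 0` are the solutions of `-b_1 u = b_0 v + G(u)`. The recursion says
exactly that `-b_1 S_{N+1}(v) = b_0 v + ∑_{j=2}^N b_j T_j(N)`, where `T_j(N)` is the `j`-th power of
the generating function truncated at degree `N`. All coefficients are nonnegative and `r_0 = 0`,
so `T_j(N) ≤ S_N(v)^j` for `j ≥ 2`; as `G` is monotone, induction on `N` shows that every partial
sum stays below every root. Hence the series converges to some `L` below every root. Since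
`S_{⌊N/j⌋+1}(v)^j ≤ T_j(N) ≤ S_N(v)^j`, we get `T_j(N) → L^j`, and dominated convergence in `j`
turns the identity above into `-b_1 L = b_0 v + G(L)`, so `L` is itself a root.
At `v = 1` the equation is `B(u) = 0`.
-/

open Finset Filter Topology

-- `convPow r j n` is the paper's `ρ^{*(j)}_n`, the `n`-th coefficient of `(∑ r_k X^k)^j`, and
-- `truncPow r v j N` is that power truncated at degree `N` and evaluated at `v`.
noncomputable def convPow (r : ℕ → ℝ) (j n : ℕ) : ℝ :=
  ∑ t ∈ Nat.antidiagonalTuple j n, ∏ i, r (t i)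

noncomputable def truncPow (r : ℕ → ℝ) (v : ℝ) (j N : ℕ) : ℝ :=
  ∑ n ∈ range (N + 1), convPow r j n * v ^ n

lemma lt_sum_of_forall_ne_zero {j : ℕ} (hj : 2 ≤ j) {t : Fin j → ℕ} (ht : ∀ i, t i ≠ 0)
    (i : Fin j) : t i < ∑ i, t i := by
  have : Nontrivial (Fin j) := Fin.nontrivial_iff_two_le.2 hj
  obtain ⟨i', hi'⟩ := exists_ne i
  exact single_lt_sum hi' (mem_univ i) (mem_univ i') (Nat.pos_of_ne_zero (ht i'))
    fun _ _ _ => Nat.zero_le _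

section Convolution

variable {r : ℕ → ℝ} {v : ℝ}

lemma prod_comp_eq_zero (hr0 : r 0 = 0) {j : ℕ} {t : Fin j → ℕ} {i : Fin j} (hi : t i = 0) :
    ∏ i, r (t i) = 0 :=
  prod_eq_zero (mem_univ i) (by rw [hi, hr0])

lemma convPow_eq_zero_of_lt (hr0 : r 0 = 0) {j n : ℕ} (h : n < j) : convPow r j n = 0 := by
  refine sum_eq_zero fun t ht => ?_
  rw [Nat.mem_antidiagonalTuple] at ht
  by_contra hne
  have hpos : ∀ i, t i ≠ 0 := fun i hi => hne (prod_comp_eq_zero hr0 hi)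
  have : j ≤ n :=
    calc j = ∑ _i : Fin j, 1 := by simp
      _ ≤ ∑ i, t i := sum_le_sum fun i _ => Nat.one_le_iff_ne_zero.2 (hpos i)
      _ = n := ht
  omega

lemma convPow_nonneg_of_forall_lt (hr0 : r 0 = 0) {j n : ℕ} (hj : 2 ≤ j)
    (hr : ∀ i < n, 0 ≤ r i) : 0 ≤ convPow r j n := by
  refine sum_nonneg fun t ht => ?_
  rw [Nat.mem_antidiagonalTuple] at ht
  by_cases h : ∃ i, t i = 0
  · obtain ⟨i, hi⟩ := h
    rw [prod_comp_eq_zero hr0 hi]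
  · exact prod_nonneg fun i _ =>
      hr _ (ht ▸ lt_sum_of_forall_ne_zero hj (fun i hi => h ⟨i, hi⟩) i)

lemma convPow_nonneg (hr : ∀ k, 0 ≤ r k) (j n : ℕ) : 0 ≤ convPow r j n :=
  sum_nonneg fun _ _ => prod_nonneg fun _ _ => hr _

lemma truncPow_nonneg (hr : ∀ k, 0 ≤ r k) (hv : 0 ≤ v) (j N : ℕ) : 0 ≤ truncPow r v j N :=
  sum_nonneg fun n _ => mul_nonneg (convPow_nonneg hr j n) (pow_nonneg hv n)

lemma truncPow_succ (r : ℕ → ℝ) (v : ℝ) (j N : ℕ) :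
    truncPow r v j (N + 1) = truncPow r v j N + convPow r j (N + 1) * v ^ (N + 1) :=
  sum_range_succ _ _

lemma truncPow_eq_zero_of_lt (hr0 : r 0 = 0) {j N : ℕ} (h : N < j) : truncPow r v j N = 0 :=
  sum_eq_zero fun n hn => by
    rw [convPow_eq_zero_of_lt hr0 (by rw [mem_range] at hn; omega), zero_mul]

lemma pow_sum_range_eq (r : ℕ → ℝ) (v : ℝ) (j m : ℕ) :
    (∑ k ∈ range m, r k * v ^ k) ^ j =
      ∑ p ∈ Fintype.piFinset fun _ : Fin j => range m, (∏ i, r (p i)) * v ^ ∑ i, p i := by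
  rw [sum_pow']
  refine sum_congr rfl fun p _ => ?_
  rw [prod_mul_distrib, prod_pow_eq_pow_sum]

lemma truncPow_eq_sum_filter (r : ℕ → ℝ) (v : ℝ) (j N : ℕ) :
    truncPow r v j N =
      ∑ p ∈ Fintype.piFinset (fun _ : Fin j => range (N + 1)) with ∑ i, p i ≤ N,
        (∏ i, r (p i)) * v ^ ∑ i, p i := by
  rw [← sum_fiberwise_of_maps_to (g := fun p : Fin j → ℕ => ∑ i, p i) (t := range (N + 1))
    fun p hp => mem_range.2 (Nat.lt_succ_of_le (mem_filter.1 hp).2)]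
  refine sum_congr rfl fun n hn => ?_
  rw [mem_range] at hn
  have hfiber : {p ∈ {p ∈ Fintype.piFinset fun _ : Fin j => range (N + 1) | ∑ i, p i ≤ N} |
      ∑ i, p i = n} = Nat.antidiagonalTuple j n := by
    ext p
    simp only [mem_filter, Fintype.mem_piFinset, mem_range, Nat.mem_antidiagonalTuple]
    refine ⟨fun h => h.2, fun h => ⟨⟨fun i => ?_, by omega⟩, h⟩⟩
    have := single_le_sum (fun i _ => Nat.zero_le (p i)) (mem_univ i)
    omega
  rw [hfiber, convPow, sum_mul]
  exact sum_congr rfl fun p hp => by rw [(Nat.mem_antidiagonalTuple.1 hp)]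

lemma truncPow_le_pow (hr0 : r 0 = 0) (hr : ∀ k, 0 ≤ r k) (hv : 0 ≤ v) {j : ℕ} (hj : 2 ≤ j)
    (N : ℕ) : truncPow r v j N ≤ (∑ k ∈ range N, r k * v ^ k) ^ j := by
  rw [truncPow_eq_sum_filter, pow_sum_range_eq, ← sum_filter_ne_zero]
  refine sum_le_sum_of_subset_of_nonneg (fun p hp => ?_)
    fun p _ _ => mul_nonneg (prod_nonneg fun i _ => hr _) (pow_nonneg hv _)
  simp only [mem_filter, Fintype.mem_piFinset, mem_range] at hp ⊢
  obtain ⟨⟨-, hpN⟩, hp0⟩ := hp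
  have hpos : ∀ i, p i ≠ 0 := fun i hi => hp0 (by rw [prod_comp_eq_zero hr0 hi, zero_mul])
  exact fun i => (lt_sum_of_forall_ne_zero hj hpos i).trans_le hpN

lemma pow_le_truncPow (hr : ∀ k, 0 ≤ r k) (hv : 0 ≤ v) {j m N : ℕ} (h : j * m ≤ N) :
    (∑ k ∈ range (m + 1), r k * v ^ k) ^ j ≤ truncPow r v j N := by
  rw [truncPow_eq_sum_filter, pow_sum_range_eq]
  refine sum_le_sum_of_subset_of_nonneg (fun p hp => ?_)
    fun p _ _ => mul_nonneg (prod_nonneg fun i _ => hr _) (pow_nonneg hv _)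
  simp only [Fintype.mem_piFinset, mem_range, mem_filter] at hp ⊢
  have hsum : ∑ i, p i ≤ N :=
    calc ∑ i, p i ≤ ∑ _i : Fin j, m := sum_le_sum fun i _ => Nat.lt_succ_iff.1 (hp i)
      _ = j * m := by simp
      _ ≤ N := h
  refine ⟨fun i => Nat.lt_succ_of_le ?_, hsum⟩
  exact (single_le_sum (fun i _ => Nat.zero_le (p i)) (mem_univ i)).trans hsum

lemma tendsto_truncPow (hr0 : r 0 = 0) (hr : ∀ k, 0 ≤ r k) (hv : 0 ≤ v) {L : ℝ}
    (hL : HasSum (fun k => r k * v ^ k) L) {j : ℕ} (hj : 2 ≤ j) :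
    Tendsto (truncPow r v j) atTop (𝓝 (L ^ j)) := by
  have hS := hL.tendsto_sum_nat
  have hdiv : Tendsto (fun N => N / j + 1) atTop atTop :=
    (tendsto_add_atTop_nat 1).comp (Nat.tendsto_div_const_atTop (by omega))
  exact tendsto_of_tendsto_of_tendsto_of_le_of_le ((hS.comp hdiv).pow j) (hS.pow j)
    (fun N => pow_le_truncPow hr hv (Nat.mul_div_le N j)) (truncPow_le_pow hr0 hr hv hj)

end Convolution

section Series

variable {b : ℕ → ℝ}

lemma summable_mul_pow (hb : Summable b) {u : ℝ} (hu : |u| ≤ 1) :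
    Summable fun j => b j * u ^ j :=
  hb.abs.of_norm_bounded fun j => by
    rw [Real.norm_eq_abs, abs_mul, abs_pow]
    exact mul_le_of_le_one_right (abs_nonneg _) (pow_le_one₀ (abs_nonneg u) hu)

lemma tsum_mul_pow_succ_eq (hb : Summable b) {u : ℝ} (hu : |u| ≤ 1) :
    ∑' j, b (j + 1) * u ^ (j + 1) = b 1 * u + ∑' j, b (j + 2) * u ^ (j + 2) := by
  rw [((summable_nat_add_iff 1).2 (summable_mul_pow hb hu)).tsum_eq_zero_add]
  simp

lemma exists_root_mem_Icc (hb0 : 0 ≤ b 0) (hb : Summable b) (hb_total : ∑' j, b j = 0)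
    {v : ℝ} (hv : v ∈ Set.Icc (0 : ℝ) 1) :
    ∃ s ∈ Set.Icc (0 : ℝ) 1, b 0 * v + ∑' j, b (j + 1) * s ^ (j + 1) = 0 := by
  have hcont : ContinuousOn (fun u : ℝ => b 0 * v + ∑' j, b (j + 1) * u ^ (j + 1))
      (Set.Icc 0 1) := by
    refine continuousOn_const.add <| continuousOn_tsum (u := fun j => |b (j + 1)|)
      (fun j => (continuous_const.mul (continuous_pow (j + 1))).continuousOn)
      ((summable_nat_add_iff 1).2 hb.abs) fun j u hu => ?_
    rw [Real.norm_eq_abs, abs_mul, abs_pow]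
    exact mul_le_of_le_one_right (abs_nonneg _)
      (pow_le_one₀ (abs_nonneg u) (abs_le.2 ⟨by linarith [hu.1], hu.2⟩))
  have htail : ∑' j, b (j + 1) = -b 0 := by
    linarith [hb.tsum_eq_zero_add]
  refine intermediate_value_Icc' zero_le_one hcont ⟨?_, ?_⟩
  · simp only [one_pow, mul_one, htail]
    nlinarith [hv.2]
  · simpa using mul_nonneg hb0 hv.1

lemma sum_range_mul_truncPow_le {r : ℕ → ℝ} {v : ℝ} (hb_nonneg : ∀ j, j ≠ 1 → 0 ≤ b j)
    (hb : Summable b) (hr0 : r 0 = 0) (hr : ∀ k, 0 ≤ r k) (hv : 0 ≤ v) {s : ℝ}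
    (hs : s ∈ Set.Icc (0 : ℝ) 1) {N : ℕ} (hN : ∑ k ∈ range N, r k * v ^ k ≤ s) :
    ∑ j ∈ range N, b (j + 2) * truncPow r v (j + 2) N ≤ ∑' j, b (j + 2) * s ^ (j + 2) := by
  have hb2 : ∀ j, 0 ≤ b (j + 2) := fun j => hb_nonneg _ (by omega)
  have hS : 0 ≤ ∑ k ∈ range N, r k * v ^ k :=
    sum_nonneg fun k _ => mul_nonneg (hr k) (pow_nonneg hv k)
  calc ∑ j ∈ range N, b (j + 2) * truncPow r v (j + 2) N
      ≤ ∑ j ∈ range N, b (j + 2) * s ^ (j + 2) :=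
        sum_le_sum fun j _ => mul_le_mul_of_nonneg_left
          ((truncPow_le_pow hr0 hr hv (by omega) N).trans (pow_le_pow_left₀ hS hN _)) (hb2 j)
    _ ≤ ∑' j, b (j + 2) * s ^ (j + 2) :=
        ((summable_nat_add_iff 2).2 (summable_mul_pow hb (abs_le.2 ⟨by linarith [hs.1], hs.2⟩))
          ).sum_le_tsum _ fun j _ => mul_nonneg (hb2 j) (pow_nonneg hs.1 _)

end Series

section Recursion

variable {b r : ℕ → ℝ} {v : ℝ}

lemma nonneg_of_recursion (hb_nonneg : ∀ j, j ≠ 1 → 0 ≤ b j) (hb1 : b 1 < 0)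
    (hr0 : r 0 = 0) (hr1 : r 1 = -b 0 / b 1)
    (hrec : ∀ k, 1 ≤ k → r (k + 1) = -(1 / b 1) *
      ∑ j ∈ Icc 2 (k + 1), b j * convPow r j (k + 1)) (k : ℕ) : 0 ≤ r k := by
  induction k using Nat.strong_induction_on with
  | _ k ih =>
    match k with
    | 0 => exact hr0.ge
    | 1 => exact hr1 ▸ div_nonneg_of_nonpos (neg_nonpos.2 (hb_nonneg 0 (by omega))) hb1.le
    | k + 2 =>
      rw [hrec (k + 1) (by omega)]
      refine mul_nonneg (by rw [one_div, neg_nonneg]; exact inv_nonpos.2 hb1.le)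
        (sum_nonneg fun j hj => mul_nonneg (hb_nonneg j ?_) ?_)
      · rw [mem_Icc] at hj; omega
      · exact convPow_nonneg_of_forall_lt hr0 (mem_Icc.1 hj).1 ih

lemma neg_mul_sum_range_eq (hb1 : b 1 ≠ 0) (hr0 : r 0 = 0) (hr1 : r 1 = -b 0 / b 1)
    (hrec : ∀ k, 1 ≤ k → r (k + 1) = -(1 / b 1) *
      ∑ j ∈ Icc 2 (k + 1), b j * convPow r j (k + 1)) (v : ℝ) {N : ℕ} (hN : 1 ≤ N) :
    -b 1 * ∑ k ∈ range (N + 1), r k * v ^ k =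
      b 0 * v + ∑ j ∈ range N, b (j + 2) * truncPow r v (j + 2) N := by
  induction N, hN using Nat.le_induction with
  | base =>
    rw [sum_range_one, truncPow_eq_zero_of_lt hr0 (by omega), sum_range_succ, sum_range_one,
      hr0, hr1]
    field_simp
    ring
  | succ N hN ih =>
    have hnext : -b 1 * r (N + 1) = ∑ j ∈ range N, b (j + 2) * convPow r (j + 2) (N + 1) := by
      rw [hrec N hN, ← Ico_add_one_right_eq_Icc, sum_Ico_eq_sum_range,
        show N + 1 + 1 - 2 = N by omega]
      field_simp
      simp_rw [add_comm 2]
    rw [sum_range_succ _ (N + 1), mul_add, ih, sum_range_succ _ N,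
      truncPow_eq_zero_of_lt hr0 (by omega), mul_zero, add_zero]
    simp only [truncPow_succ, mul_add, sum_add_distrib]
    rw [← mul_assoc, hnext, sum_mul]
    simp only [mul_assoc]
    ring

lemma sum_range_le_of_root (hb_nonneg : ∀ j, j ≠ 1 → 0 ≤ b j) (hb1 : b 1 < 0)
    (hb : Summable b) (hr0 : r 0 = 0) (hr1 : r 1 = -b 0 / b 1)
    (hrec : ∀ k, 1 ≤ k → r (k + 1) = -(1 / b 1) *
      ∑ j ∈ Icc 2 (k + 1), b j * convPow r j (k + 1))
    (hr : ∀ k, 0 ≤ r k) (hv : 0 ≤ v) {s : ℝ} (hs : s ∈ Set.Icc (0 : ℝ) 1)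
    (hroot : -b 1 * s = b 0 * v + ∑' j, b (j + 2) * s ^ (j + 2)) (N : ℕ) :
    ∑ k ∈ range N, r k * v ^ k ≤ s := by
  induction N with
  | zero => simpa using hs.1
  | succ N ih =>
    rcases Nat.eq_zero_or_pos N with rfl | hN
    · simpa [hr0] using hs.1
    refine le_of_mul_le_mul_left ?_ (neg_pos.2 hb1)
    rw [neg_mul_sum_range_eq hb1.ne hr0 hr1 hrec v hN, hroot]
    linarith [sum_range_mul_truncPow_le hb_nonneg hb hr0 hr hv hs ih]

lemma neg_mul_eq_of_hasSum (hb_nonneg : ∀ j, j ≠ 1 → 0 ≤ b j) (hb1 : b 1 ≠ 0)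
    (hb : Summable b) (hr0 : r 0 = 0) (hr1 : r 1 = -b 0 / b 1)
    (hrec : ∀ k, 1 ≤ k → r (k + 1) = -(1 / b 1) *
      ∑ j ∈ Icc 2 (k + 1), b j * convPow r j (k + 1))
    (hr : ∀ k, 0 ≤ r k) (hv : 0 ≤ v) {L : ℝ} (hL : HasSum (fun k => r k * v ^ k) L)
    (hL1 : L ≤ 1) :
    -b 1 * L = b 0 * v + ∑' j, b (j + 2) * L ^ (j + 2) := by
  have hb2 : ∀ j, 0 ≤ b (j + 2) := fun j => hb_nonneg _ (by omega)
  have hterm : ∀ k, 0 ≤ r k * v ^ k := fun k => mul_nonneg (hr k) (pow_nonneg hv k)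
  have hL0 : 0 ≤ L := hL.nonneg hterm
  have hlhs : Tendsto (fun N => -b 1 * ∑ k ∈ range (N + 1), r k * v ^ k) atTop
      (𝓝 (-b 1 * L)) :=
    (hL.tendsto_sum_nat.comp (tendsto_add_atTop_nat 1)).const_mul _
  have hrhs : Tendsto (fun N => b 0 * v + ∑' j, b (j + 2) * truncPow r v (j + 2) N) atTop
      (𝓝 (b 0 * v + ∑' j, b (j + 2) * L ^ (j + 2))) := by
    refine tendsto_const_nhds.add <| tendsto_tsum_of_dominated_convergence
      ((summable_nat_add_iff 2).2 hb)
      (fun j => (tendsto_truncPow hr0 hr hv hL (by omega)).const_mul _)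
      (Eventually.of_forall fun N j => ?_)
    have hT := truncPow_nonneg hr hv (j + 2) N
    rw [Real.norm_eq_abs, abs_of_nonneg (mul_nonneg (hb2 j) hT)]
    refine mul_le_of_le_one_right (hb2 j) ?_
    calc truncPow r v (j + 2) N ≤ (∑ k ∈ range N, r k * v ^ k) ^ (j + 2) :=
          truncPow_le_pow hr0 hr hv (by omega) N
      _ ≤ L ^ (j + 2) :=
          pow_le_pow_left₀ (sum_nonneg fun k _ => hterm k)
            (sum_le_hasSum _ (fun k _ => hterm k) hL) _
      _ ≤ 1 := pow_le_one₀ hL0 hL1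
  refine tendsto_nhds_unique (hlhs.congr' ?_) hrhs
  filter_upwards [eventually_ge_atTop 1] with N hN
  rw [neg_mul_sum_range_eq hb1 hr0 hr1 hrec v hN, tsum_eq_sum fun j hj => ?_]
  rw [mem_range, not_lt] at hj
  rw [truncPow_eq_zero_of_lt hr0 (by omega), mul_zero]

theorem isLeast_root_hasSum (hb_nonneg : ∀ j, j ≠ 1 → 0 ≤ b j) (hb1 : b 1 < 0)
    (hb : Summable b) (hb_total : ∑' j, b j = 0) (hr0 : r 0 = 0) (hr1 : r 1 = -b 0 / b 1)
    (hrec : ∀ k, 1 ≤ k → r (k + 1) = -(1 / b 1) *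
      ∑ j ∈ Icc 2 (k + 1), b j * convPow r j (k + 1))
    (hr : ∀ k, 0 ≤ r k) (hv : v ∈ Set.Icc (0 : ℝ) 1) :
    ∃ s : ℝ, IsLeast {u ∈ Set.Icc (0 : ℝ) 1 |
        b 0 * v + (∑' j : ℕ, b (j + 1) * u ^ (j + 1)) = 0} s ∧
      HasSum (fun k : ℕ => r k * v ^ k) s := by
  have hroot_iff : ∀ u ∈ Set.Icc (0 : ℝ) 1, b 0 * v + ∑' j, b (j + 1) * u ^ (j + 1) = 0 ↔
      -b 1 * u = b 0 * v + ∑' j, b (j + 2) * u ^ (j + 2) := fun u hu => by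
    rw [tsum_mul_pow_succ_eq hb (abs_le.2 ⟨by linarith [hu.1], hu.2⟩)]
    constructor <;> intro h <;> linarith
  have hle_root : ∀ s ∈ {u ∈ Set.Icc (0 : ℝ) 1 |
      b 0 * v + (∑' j : ℕ, b (j + 1) * u ^ (j + 1)) = 0}, ∀ N,
      ∑ k ∈ range N, r k * v ^ k ≤ s := fun s hs =>
    sum_range_le_of_root hb_nonneg hb1 hb hr0 hr1 hrec hr hv.1 hs.1 ((hroot_iff s hs.1).1 hs.2)
  have hterm : ∀ k, 0 ≤ r k * v ^ k := fun k => mul_nonneg (hr k) (pow_nonneg hv.1 k)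
  obtain ⟨s₀, hs₀, hs₀_root⟩ :=
    exists_root_mem_Icc (hb_nonneg 0 (by omega)) hb hb_total hv
  have hsum : Summable fun k => r k * v ^ k :=
    summable_of_sum_range_le hterm (hle_root s₀ ⟨hs₀, hs₀_root⟩)
  have hL_le : ∀ s ∈ {u ∈ Set.Icc (0 : ℝ) 1 |
      b 0 * v + (∑' j : ℕ, b (j + 1) * u ^ (j + 1)) = 0}, ∑' k, r k * v ^ k ≤ s :=
    fun s hs => hsum.tsum_le_of_sum_range_le (hle_root s hs)
  have hL : ∑' k, r k * v ^ k ∈ Set.Icc (0 : ℝ) 1 :=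
    ⟨tsum_nonneg hterm, (hL_le s₀ ⟨hs₀, hs₀_root⟩).trans hs₀.2⟩
  refine ⟨_, ⟨⟨hL, (hroot_iff _ hL).2 ?_⟩, hL_le⟩, hsum.hasSum⟩
  exact neg_mul_eq_of_hasSum hb_nonneg hb1.ne hb hr0 hr1 hrec hr hv.1 hsum.hasSum hL.2

end Recursion

theorem stmt_11_general (b : ℕ → ℝ)
    (hb_nonneg : ∀ j, j ≠ 1 → 0 ≤ b j) (hb1 : b 1 < 0)
    (hb_sum : Summable b) (hb_total : ∑' j, b j = 0)
    (ρ : ℝ) (hρ : IsLeast {u ∈ Set.Icc (0:ℝ) 1 | (∑' j : ℕ, b j * u ^ j) = 0} ρ)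
    (r : ℕ → ℝ) (hr0 : r 0 = 0) (hr1 : r 1 = -b 0 / b 1)
    (hrec : ∀ k, 1 ≤ k → r (k + 1) = -(1 / b 1) *
      ∑ j ∈ Finset.Icc 2 (k + 1),
        b j * ∑ t ∈ Finset.Nat.antidiagonalTuple j (k + 1), ∏ i, r (t i)) :
    (∀ k, 0 ≤ r k) ∧
    (∀ v ∈ Set.Icc (0:ℝ) 1, ∃ s : ℝ,
      IsLeast {u ∈ Set.Icc (0:ℝ) 1 |
        b 0 * v + (∑' j : ℕ, b (j + 1) * u ^ (j + 1)) = 0} s ∧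
      HasSum (fun k : ℕ => r k * v ^ k) s) ∧
    HasSum r ρ := by
  have hr := nonneg_of_recursion hb_nonneg hb1 hr0 hr1 hrec
  have hroots := fun v (hv : v ∈ Set.Icc (0 : ℝ) 1) =>
    isLeast_root_hasSum hb_nonneg hb1 hb_sum hb_total hr0 hr1 hrec hr hv
  refine ⟨hr, hroots, ?_⟩
  obtain ⟨s, hs, hsum⟩ := hroots 1 ⟨zero_le_one, le_rfl⟩
  have hset : {u ∈ Set.Icc (0 : ℝ) 1 | b 0 * 1 + ∑' j, b (j + 1) * u ^ (j + 1) = 0} =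
      {u ∈ Set.Icc (0 : ℝ) 1 | ∑' j, b j * u ^ j = 0} := by
    ext u
    refine and_congr_right fun hu => ?_
    rw [(summable_mul_pow hb_sum (abs_le.2 ⟨by linarith [hu.1], hu.2⟩)).tsum_eq_zero_add]
    simp
  rw [hset] at hs
  simpa [hρ.unique hs] using hsum

theorem stmt_11 (b : ℕ → ℝ)
    (hb_nonneg : ∀ j, j ≠ 1 → 0 ≤ b j) (hb1 : b 1 < 0)
    (hb_sum : Summable b) (hb_total : ∑' j, b j = 0)
    (ρ : ℝ) (hρ : IsLeast {u ∈ Set.Icc (0:ℝ) 1 | (∑' j : ℕ, b j * u ^ j) = 0} ρ)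
    (hb0 : 0 < b 0)
    (r : ℕ → ℝ) (hr0 : r 0 = 0) (hr1 : r 1 = -b 0 / b 1)
    (hrec : ∀ k, 1 ≤ k → r (k + 1) = -(1 / b 1) *
      ∑ j ∈ Finset.Icc 2 (k + 1),
        b j * ∑ t ∈ Finset.Nat.antidiagonalTuple j (k + 1), ∏ i, r (t i)) :
    (∀ k, 0 ≤ r k) ∧
    (∀ v ∈ Set.Icc (0:ℝ) 1, ∃ s : ℝ,
      IsLeast {u ∈ Set.Icc (0:ℝ) 1 |
        b 0 * v + (∑' j : ℕ, b (j + 1) * u ^ (j + 1)) = 0} s ∧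
      HasSum (fun k : ℕ => r k * v ^ k) s) ∧
    HasSum r ρ :=
  stmt_11_general b hb_nonneg hb1 hb_sum hb_total ρ hρ r hr0 hr1 hrec
end

section
/- For every y ∈ [0,1] and z ∈ (0,1], the series Σ_{n=2}^∞ ((2n−3)!! · 2^{n−1} · μ^n λ^{n−1} / (n! (μ+λ)^{2n−1})) z^{n−1} y^n converges absolutely and ((μ+λ) − √((μ+λ)² − 4μλzy)) / (2λz) = μy/(μ+λ) + Σ_{n=2}^∞ ((2n−3)!! · 2^{n−1} · μ^n λ^{n−1} / (n! (μ+λ)^{2n−1})) z^{n−1} y^n, where (2n−3)!! denotes the double factorial of 2n−3. -/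
/-!
With `x = 4μλzy / (μ + λ)² ∈ [0, 1]` the left-hand side is `(μ + λ) / (2λz) · (1 - √(1 - x))`, so
the claim is the expansion `1 - √(1 - x) = ∑ C_k x^(k+1) / 2^(2k+1)` (Catalan numbers `C_k`),
rescaled, together with `(n + 2)! C_(n+1) = 2^(n+1) (2n+1)‼`. The coefficients are nonnegative and
their partial sums telescope to `1 - binom(2N, N) / 4^N ≤ 1`, so the series converges on all of
`[0, 1]`, endpoint included. By the Catalan recursion and a Cauchy product its sum `G` satisfies
`(1 - G)² = 1 - x`, and `G ≤ 1` selects the root `1 - G = √(1 - x)`.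
-/

open Finset
open scoped Nat

/-- The coefficient of `x ^ (k + 1)` (not `x ^ k`) in `1 - √(1 - x)`. -/
noncomputable def oneSubSqrtCoeff (k : ℕ) : ℝ := catalan k / 2 ^ (2 * k + 1)

lemma oneSubSqrtCoeff_nonneg (k : ℕ) : 0 ≤ oneSubSqrtCoeff k := by
  unfold oneSubSqrtCoeff; positivity

lemma oneSubSqrtCoeff_zero : oneSubSqrtCoeff 0 = 1 / 2 := by
  simp [oneSubSqrtCoeff]

lemma oneSubSqrtCoeff_eq_sub (k : ℕ) :
    oneSubSqrtCoeff k =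
      (Nat.centralBinom k : ℝ) / 4 ^ k - (Nat.centralBinom (k + 1) : ℝ) / 4 ^ (k + 1) := by
  have hk : (k : ℝ) + 1 ≠ 0 := by positivity
  have hcat : (catalan k : ℝ) = Nat.centralBinom k / (k + 1) := by
    rw [eq_div_iff hk, mul_comm]
    exact_mod_cast succ_mul_catalan_eq_centralBinom k
  have hbinom :
      (Nat.centralBinom (k + 1) : ℝ) = 2 * (2 * k + 1) * Nat.centralBinom k / (k + 1) := by
    rw [eq_div_iff hk, mul_comm]
    exact_mod_cast Nat.succ_mul_centralBinom_succ k
  rw [oneSubSqrtCoeff, hcat, hbinom, pow_succ, pow_succ, pow_mul]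
  field_simp
  ring

lemma sum_range_oneSubSqrtCoeff (N : ℕ) :
    ∑ k ∈ range N, oneSubSqrtCoeff k = 1 - (Nat.centralBinom N : ℝ) / 4 ^ N := by
  simp only [oneSubSqrtCoeff_eq_sub]
  rw [sum_range_sub' (fun k => (Nat.centralBinom k : ℝ) / 4 ^ k)]
  simp

lemma sum_range_oneSubSqrtCoeff_le_one (N : ℕ) : ∑ k ∈ range N, oneSubSqrtCoeff k ≤ 1 := by
  rw [sum_range_oneSubSqrtCoeff]
  linarith [show (0 : ℝ) ≤ Nat.centralBinom N / 4 ^ N by positivity]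

lemma sum_antidiagonal_oneSubSqrtCoeff (n : ℕ) :
    ∑ kl ∈ antidiagonal n, oneSubSqrtCoeff kl.1 * oneSubSqrtCoeff kl.2 =
      2 * oneSubSqrtCoeff (n + 1) := by
  have hterm : ∀ kl ∈ antidiagonal n, oneSubSqrtCoeff kl.1 * oneSubSqrtCoeff kl.2 =
      (catalan kl.1 * catalan kl.2 : ℝ) / 2 ^ (2 * n + 2) := by
    rintro ⟨k, l⟩ hkl
    rw [HasAntidiagonal.mem_antidiagonal] at hkl
    subst hkl
    simp only [oneSubSqrtCoeff]
    rw [div_mul_div_comm, ← pow_add]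
    ring_nf
  rw [sum_congr rfl hterm, ← sum_div, oneSubSqrtCoeff]
  have hcat : ∑ kl ∈ antidiagonal n, (catalan kl.1 * catalan kl.2 : ℝ) = catalan (n + 1) := by
    rw [catalan_succ']; push_cast; rfl
  rw [hcat, show 2 * (n + 1) + 1 = (2 * n + 2) + 1 by ring, pow_succ]
  field_simp
  ring

section PowerSeries

variable {x : ℝ}

lemma summable_oneSubSqrtCoeff_mul_pow (hx0 : 0 ≤ x) (hx1 : x ≤ 1) :
    Summable fun k => oneSubSqrtCoeff k * x ^ k := by
  refine summable_of_sum_range_le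
    (fun k => mul_nonneg (oneSubSqrtCoeff_nonneg k) (pow_nonneg hx0 k)) fun N =>
    (sum_le_sum fun k _ => ?_).trans (sum_range_oneSubSqrtCoeff_le_one N)
  exact mul_le_of_le_one_right (oneSubSqrtCoeff_nonneg k) (pow_le_one₀ hx0 hx1)

lemma mul_tsum_oneSubSqrtCoeff_mul_pow_sq (hx0 : 0 ≤ x) (hx1 : x ≤ 1) :
    x * (∑' k, oneSubSqrtCoeff k * x ^ k) ^ 2 = 2 * ∑' k, oneSubSqrtCoeff k * x ^ k - 1 := by
  have hsum := summable_oneSubSqrtCoeff_mul_pow hx0 hx1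
  have hcauchy := tsum_mul_tsum_eq_tsum_sum_antidiagonal_of_summable_norm hsum.norm hsum.norm
  have hinner : ∀ n, ∑ kl ∈ antidiagonal n,
      oneSubSqrtCoeff kl.1 * x ^ kl.1 * (oneSubSqrtCoeff kl.2 * x ^ kl.2) =
        2 * (oneSubSqrtCoeff (n + 1) * x ^ n) := by
    intro n
    rw [← mul_assoc, ← sum_antidiagonal_oneSubSqrtCoeff, sum_mul]
    refine sum_congr rfl fun kl hkl => ?_
    rw [← HasAntidiagonal.mem_antidiagonal.mp hkl, pow_add]
    ring
  have hshift : ∑' k, oneSubSqrtCoeff (k + 1) * x ^ (k + 1) =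
      x * ∑' k, oneSubSqrtCoeff (k + 1) * x ^ k := by
    rw [← tsum_mul_left]; exact tsum_congr fun k => by ring
  rw [sq, hcauchy, tsum_congr hinner, tsum_mul_left, hsum.tsum_eq_zero_add, hshift,
    oneSubSqrtCoeff_zero]
  ring

lemma tsum_oneSubSqrtCoeff_mul_pow_succ_le_one (hx0 : 0 ≤ x) (hx1 : x ≤ 1) :
    ∑' k, oneSubSqrtCoeff k * x ^ (k + 1) ≤ 1 := by
  have hle : ∀ k, oneSubSqrtCoeff k * x ^ (k + 1) ≤ oneSubSqrtCoeff k := fun k =>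
    mul_le_of_le_one_right (oneSubSqrtCoeff_nonneg k) (pow_le_one₀ hx0 hx1)
  refine ((summable_oneSubSqrtCoeff_mul_pow hx0 hx1).mul_left x |>.congr fun k => ?_)
    |>.tsum_le_of_sum_range_le fun N => ?_
  · ring
  · exact (sum_le_sum fun k _ => hle k).trans (sum_range_oneSubSqrtCoeff_le_one N)

theorem hasSum_oneSubSqrtCoeff_mul_pow_succ (hx0 : 0 ≤ x) (hx1 : x ≤ 1) :
    HasSum (fun k => oneSubSqrtCoeff k * x ^ (k + 1)) (1 - √(1 - x)) := by
  have hsum : Summable fun k => oneSubSqrtCoeff k * x ^ (k + 1) :=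
    (summable_oneSubSqrtCoeff_mul_pow hx0 hx1).mul_left x |>.congr fun k => by ring
  have hG : ∑' k, oneSubSqrtCoeff k * x ^ (k + 1) = x * ∑' k, oneSubSqrtCoeff k * x ^ k := by
    rw [← tsum_mul_left]; exact tsum_congr fun k => by ring
  have hquad : 1 - x = (1 - ∑' k, oneSubSqrtCoeff k * x ^ (k + 1)) ^ 2 := by
    rw [hG]; linear_combination -x * mul_tsum_oneSubSqrtCoeff_mul_pow_sq hx0 hx1
  rw [hquad, Real.sqrt_sq (sub_nonneg.mpr (tsum_oneSubSqrtCoeff_mul_pow_succ_le_one hx0 hx1)),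
    sub_sub_cancel]
  exact hsum.hasSum

end PowerSeries

lemma centralBinom_succ_mul_factorial (n : ℕ) :
    Nat.centralBinom (n + 1) * (n + 1)! = 2 ^ (n + 1) * (2 * n + 1)‼ := by
  have hfact : (2 * (n + 1))! = 2 ^ (n + 1) * (n + 1)! * (2 * n + 1)‼ := by
    rw [show 2 * (n + 1) = 2 * n + 1 + 1 by ring, Nat.factorial_eq_mul_doubleFactorial,
      show 2 * n + 1 + 1 = 2 * (n + 1) by ring, Nat.doubleFactorial_two_mul]
  have h := Nat.choose_mul_factorial_mul_factorial (show n + 1 ≤ 2 * (n + 1) by omega)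
  rw [show 2 * (n + 1) - (n + 1) = n + 1 by omega, ← Nat.centralBinom_eq_two_mul_choose, hfact,
    mul_right_comm (2 ^ (n + 1))] at h
  exact Nat.eq_of_mul_eq_mul_right (Nat.factorial_pos _) h

lemma factorial_mul_catalan_succ (n : ℕ) :
    (n + 2)! * catalan (n + 1) = 2 ^ (n + 1) * (2 * n + 1)‼ := by
  rw [← centralBinom_succ_mul_factorial, ← succ_mul_catalan_eq_centralBinom, Nat.factorial_succ]
  ring

lemma oneSubSqrtCoeff_succ (n : ℕ) :
    oneSubSqrtCoeff (n + 1) = ((2 * n + 1)‼ : ℝ) / (2 ^ (n + 2) * (n + 2)!) := by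
  have h : ((n + 2)! : ℝ) * catalan (n + 1) = 2 ^ (n + 1) * (2 * n + 1)‼ := by
    exact_mod_cast factorial_mul_catalan_succ n
  rw [oneSubSqrtCoeff, eq_div_iff (by positivity), div_mul_eq_mul_div, div_eq_iff (by positivity)]
  linear_combination (2 : ℝ) ^ (n + 2) * h

lemma doubleFactorial_term_eq_oneSubSqrtCoeff {μ lam z : ℝ} (hlam : lam ≠ 0) (hz : z ≠ 0)
    (hml : μ + lam ≠ 0) (y : ℝ) (n : ℕ) :
    ((Nat.doubleFactorial (2 * (n + 2) - 3) : ℝ) * 2 ^ (n + 2 - 1) * μ ^ (n + 2) *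
        lam ^ (n + 2 - 1) / ((Nat.factorial (n + 2) : ℝ) * (μ + lam) ^ (2 * (n + 2) - 1))) *
      z ^ (n + 2 - 1) * y ^ (n + 2) =
    (μ + lam) / (2 * lam * z) *
      (oneSubSqrtCoeff (n + 1) * (4 * μ * lam * z * y / (μ + lam) ^ 2) ^ (n + 2)) := by
  rw [show 2 * (n + 2) - 3 = 2 * n + 1 by omega, show 2 * (n + 2) - 1 = 2 * n + 3 by omega,
    show n + 2 - 1 = n + 1 by omega, oneSubSqrtCoeff_succ,
    show 4 * μ * lam * z * y = 2 ^ 2 * (μ * lam * z * y) by ring, div_pow, mul_pow]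
  simp only [← pow_mul]
  field_simp
  ring

theorem stmt_14 (μ lam : ℝ) (hμ : 0 < μ) (hlam : 0 < lam)
    (y z : ℝ) (hy : y ∈ Set.Icc (0:ℝ) 1) (hz : z ∈ Set.Ioc (0:ℝ) 1) :
    Summable (fun n : ℕ =>
      |((Nat.doubleFactorial (2 * (n + 2) - 3) : ℝ) * 2 ^ (n + 2 - 1) * μ ^ (n + 2) *
          lam ^ (n + 2 - 1) / ((Nat.factorial (n + 2) : ℝ) * (μ + lam) ^ (2 * (n + 2) - 1))) *
        z ^ (n + 2 - 1) * y ^ (n + 2)|) ∧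
    ((μ + lam) - Real.sqrt ((μ + lam) ^ 2 - 4 * μ * lam * z * y)) / (2 * lam * z) =
      μ * y / (μ + lam) +
      ∑' n : ℕ,
        ((Nat.doubleFactorial (2 * (n + 2) - 3) : ℝ) * 2 ^ (n + 2 - 1) * μ ^ (n + 2) *
            lam ^ (n + 2 - 1) / ((Nat.factorial (n + 2) : ℝ) * (μ + lam) ^ (2 * (n + 2) - 1))) *
          z ^ (n + 2 - 1) * y ^ (n + 2) := by
  obtain ⟨hy0, hy1⟩ := hy
  obtain ⟨hz0, hz1⟩ := hz
  have hml : 0 < μ + lam := add_pos hμ hlam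
  set x := 4 * μ * lam * z * y / (μ + lam) ^ 2 with hx
  have hx0 : 0 ≤ x := by positivity
  have hx1 : x ≤ 1 := by
    rw [hx, div_le_one (by positivity)]
    nlinarith [sq_nonneg (μ - lam), mul_le_one₀ hz1 hy0 hy1, mul_pos hμ hlam]
  have hsqrt : √((μ + lam) ^ 2 - 4 * μ * lam * z * y) = (μ + lam) * √(1 - x) := by
    rw [show (μ + lam) ^ 2 - 4 * μ * lam * z * y = (μ + lam) ^ 2 * (1 - x) by
      rw [hx]; field_simp, Real.sqrt_mul (sq_nonneg _), Real.sqrt_sq hml.le]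
  have hseries := ((hasSum_nat_add_iff' 1).mpr
    (hasSum_oneSubSqrtCoeff_mul_pow_succ hx0 hx1)).mul_left ((μ + lam) / (2 * lam * z))
  rw [← funext (doubleFactorial_term_eq_oneSubSqrtCoeff hlam.ne' hz0.ne' hml.ne' y)] at hseries
  refine ⟨hseries.summable.abs, ?_⟩
  rw [hseries.tsum_eq, hsqrt, sum_range_one, oneSubSqrtCoeff_zero, zero_add, pow_one, hx]
  field_simp
  ring
end
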